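/- arXiv:2405.02446 — 2 statements merged into one kernel-verified Lean document; each statement's English description precedes it below -/
import Mathlib

section
/- Let k₁, k₂ ∈ ℤ with 0 ≤ k₁ < k₂, and let k ∈ ℤ with k₁ ≤ k ≤ k₂. There exists a constant C, depending only on k₁, k₂ and k, such that every 2π-periodic f ∈ C^{k₂}(ℝ) satisfies ‖f‖_{C^k} ≤ C ‖f‖_{C^{k₁}}^{(k₂−k)/(k₂−k₁)} ‖f‖_{C^{k₂}}^{(k−k₁)/(k₂−k₁)}. -/
open Real MeasureTheory Filter Set
open scoped RealInnerProductSpace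

noncomputable section

abbrev R2 : Type := EuclideanSpace ℝ (Fin 2)

/-- The vector `(a, b)` in the Euclidean plane. -/
def vec2 (a b : ℝ) : R2 := (WithLp.equiv 2 (Fin 2 → ℝ)).symm ![a, b]

/-- `‖f‖_{C⁰} = sup_s ‖f s‖`. -/
def C0Norm {E : Type*} [NormedAddCommGroup E] (f : ℝ → E) : ℝ := ⨆ s : ℝ, ‖f s‖

/-- `‖f‖_{C^k} = ‖f‖_{C⁰} + ∑_{ℓ=1}^k ‖∂^ℓ f‖_{C⁰}`. -/
def CkNorm {E : Type*} [NormedAddCommGroup E] [NormedSpace ℝ E] (k : ℕ) (f : ℝ → E) : ℝ :=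
  C0Norm f + ∑ ℓ ∈ Finset.Icc 1 k, C0Norm (iteratedDeriv ℓ f)

/-- Hölder seminorm `sup_{s₁ ≠ s₂} ‖f s₁ - f s₂‖ / |s₁ - s₂|^γ`. -/
def holderSemi {E : Type*} [NormedAddCommGroup E] (γ : ℝ) (f : ℝ → E) : ℝ :=
  ⨆ p : {q : ℝ × ℝ // q.1 ≠ q.2}, ‖f p.val.1 - f p.val.2‖ / |p.val.1 - p.val.2| ^ γ

/-- The Hölder norm `‖f‖_{C^{k,γ}} = ‖f‖_{C^{k-1}} + ‖∂^k f‖_{C^γ}`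
(equivalently `‖f‖_{C^k}` plus the Hölder seminorm of `∂^k f`); for `k = 0`
this is `‖f‖_{C^γ}`. -/
def CkgNorm {E : Type*} [NormedAddCommGroup E] [NormedSpace ℝ E] (k : ℕ) (γ : ℝ) (f : ℝ → E) : ℝ :=
  CkNorm k f + holderSemi γ (iteratedDeriv k f)

/-- `f` is `γ`-Hölder continuous (for some constant). -/
def HolderBnd {E : Type*} [NormedAddCommGroup E] (γ : ℝ) (f : ℝ → E) : Prop :=
  ∃ C : ℝ, ∀ x y : ℝ, ‖f x - f y‖ ≤ C * |x - y| ^ γ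

/-- Membership in the Hölder space `C^{k,γ}`. -/
def MemCkg {E : Type*} [NormedAddCommGroup E] [NormedSpace ℝ E] (k : ℕ) (γ : ℝ) (f : ℝ → E) : Prop :=
  ContDiff ℝ k f ∧ HolderBnd γ (iteratedDeriv k f)

/-- Norm of `C^β` for a real exponent `β ≥ 0`: `C^{⌊β⌋,β-⌊β⌋}` if `β ∉ ℤ`, else `C^k`. -/
def CrNorm {E : Type*} [NormedAddCommGroup E] [NormedSpace ℝ E] (β : ℝ) (f : ℝ → E) : ℝ :=
  if β = ⌊β⌋ then CkNorm ⌊β⌋.toNat f else CkgNorm ⌊β⌋.toNat (β - ⌊β⌋) f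

/-- Membership in `C^β` for a real exponent `β ≥ 0`. -/
def MemCr {E : Type*} [NormedAddCommGroup E] [NormedSpace ℝ E] (β : ℝ) (f : ℝ → E) : Prop :=
  ContDiff ℝ ⌊β⌋.toNat f ∧ (β = ⌊β⌋ ∨ HolderBnd (β - ⌊β⌋) (iteratedDeriv ⌊β⌋.toNat f))

/-- The tangent vector `τ(s) = (cos (s + φ s), sin (s + φ s))`. -/
def tangentv (φ : ℝ → ℝ) (s : ℝ) : R2 := vec2 (Real.cos (s + φ s)) (Real.sin (s + φ s))

/-- The outward normal vector `n(s) = (sin (s + φ s), -cos (s + φ s))`. -/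
def normalv (φ : ℝ → ℝ) (s : ℝ) : R2 := vec2 (Real.sin (s + φ s)) (-Real.cos (s + φ s))

/-- The curve `X(s) = ∫₀ˢ τ`. -/
def curve (φ : ℝ → ℝ) (s : ℝ) : R2 := ∫ u in (0:ℝ)..s, tangentv φ u

/-- Distance on `ℝ/2πℤ`. -/
def circleDist (a b : ℝ) : ℝ := ⨅ n : ℤ, |a - b - 2 * π * n|

/-- Arc-chord constant of a closed curve. -/
def arcChord (X : ℝ → R2) : ℝ :=
  ⨅ p : {q : ℝ × ℝ // circleDist q.1 q.2 ≠ 0},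
    ‖X p.val.1 - X p.val.2‖ / circleDist p.val.1 p.val.2

/-- Arc-chord constant `|φ|_*` of the curve built from the angle `φ`. -/
def arcChordPhi (φ : ℝ → ℝ) : ℝ := arcChord (curve φ)

/-- `d(φ) = min_{a ∈ ℝ} ‖φ - a‖_{C⁰}`, measuring distance to circles. -/
def dPhi (φ : ℝ → ℝ) : ℝ := ⨅ a : ℝ, C0Norm (fun s => φ s - a)

/-- The commutator `[H, f] g (s) = (1/π) ∫_{S¹} ((f η - f s) / (2 tan ((s-η)/2))) g η dη`. -/
def commH {E : Type*} [NormedAddCommGroup E] [NormedSpace ℝ E] [CompleteSpace E]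
    (f : ℝ → E) (g : ℝ → ℝ) (s : ℝ) : E :=
  (1/π) • ∫ η in (0:ℝ)..(2*π), (g η / (2 * Real.tan ((s - η)/2))) • (f η - f s)

/-- The periodic Hilbert transform (principal value written in symmetrized form). -/
def hilbertT {E : Type*} [NormedAddCommGroup E] [NormedSpace ℝ E] [CompleteSpace E]
    (g : ℝ → E) (s : ℝ) : E :=
  (1/π) • ∫ η in (0:ℝ)..π, (1 / (2 * Real.tan (η/2))) • (g (s - η) - g (s + η))

/-- The kernel of the remainder operator `R`. -/
def Rkernel (X : ℝ → R2) (s η : ℝ) : Matrix (Fin 2) (Fin 2) ℝ :=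
  Matrix.of fun i j =>
    (-((inner ℝ (X s - X η) (deriv X s) : ℝ) / ‖X s - X η‖^2 - (1/2) / Real.tan ((s - η)/2)))
        * (if i = j then 1 else 0)
    + deriv (fun s' => (X s' - X η) i * (X s' - X η) j / ‖X s' - X η‖^2) s

/-- The remainder operator `R Q (s) = (1/4π) ∫_{S¹} K(s,η) Q(η) dη`. -/
def Rop (X Q : ℝ → R2) (s : ℝ) : R2 :=
  vec2 ((1/(4*π)) * ∫ η in (0:ℝ)..(2*π),
          (Rkernel X s η 0 0 * Q η 0 + Rkernel X s η 0 1 * Q η 1))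
       ((1/(4*π)) * ∫ η in (0:ℝ)..(2*π),
          (Rkernel X s η 1 0 * Q η 0 + Rkernel X s η 1 1 * Q η 1))

/-- The tension operator `M(φ)σ`. -/
def Mop (φ σ : ℝ → ℝ) (s : ℝ) : ℝ :=
  -(1/4) * (inner ℝ (tangentv φ s) (commH (normalv φ) (fun η => σ η * (1 + deriv φ η)) s) : ℝ)
  + (1/4) * (inner ℝ (tangentv φ s) (commH (tangentv φ) (deriv σ) s) : ℝ)
  - (inner ℝ (tangentv φ s) (Rop (curve φ)
      (fun η => (-(σ η * (1 + deriv φ η))) • normalv φ η + deriv σ η • tangentv φ η) s) : ℝ)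

/-- The forcing `F(φ)` of the tension equation. -/
def Fphi (φ : ℝ → ℝ) (s : ℝ) : ℝ :=
  -(1/4) * (inner ℝ (tangentv φ s) (commH (normalv φ)
      (fun η => iteratedDeriv 3 φ η + (1/2) * (1 + deriv φ η)^3) s) : ℝ)
  + (inner ℝ (tangentv φ s) (Rop (curve φ)
      (fun η => (iteratedDeriv 3 φ η + (1/2) * (1 + deriv φ η)^3) • normalv φ η) s) : ℝ)

/-- The normal force density `F_n(φ,σ)`. -/
def Fn (φ σ : ℝ → ℝ) (s : ℝ) : ℝ :=
  iteratedDeriv 3 φ s + (1/2) * (1 + deriv φ s)^3 - σ s * (1 + deriv φ s)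

/-- The nonlinearity `N(φ,σ) = N₁ + N₂ + N₃`. -/
def Nop (φ σ : ℝ → ℝ) (s : ℝ) : ℝ :=
  (1/4) * hilbertT (fun η => (1/2) * (deriv φ η)^3 - σ η * (1 + deriv φ η)) s
  - (1/4) * (inner ℝ (normalv φ s) (commH (normalv φ) (fun η => Fn φ σ η) s) : ℝ)
  - (1/4) * (inner ℝ (normalv φ s) (commH (tangentv φ) (deriv σ) s) : ℝ)
  + (inner ℝ (normalv φ s) (Rop (curve φ)
      (fun η => Fn φ σ η • normalv φ η + deriv σ η • tangentv φ η) s) : ℝ)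

/-- The time-weighted norm `‖φ‖_{X(T)}`. -/
def XNorm (γ T : ℝ) (φ : ℝ → ℝ → ℝ) : ℝ :=
  (⨆ t : Set.Icc (0:ℝ) T, CkgNorm 1 γ (φ t.val))
  + ⨆ t : Set.Icc (0:ℝ) T, t.val * CkgNorm 4 γ (φ t.val)

/-- Fourier coefficient `f̂(n) = (1/2π) ∫₀^{2π} f(σ) e^{-inσ} dσ`. -/
def fourierCoef (f : ℝ → ℝ) (n : ℤ) : ℂ :=
  (1/(2*π) : ℂ) * ∫ x in (0:ℝ)..(2*π), (f x : ℂ) * Complex.exp (-(Complex.I * (n : ℂ) * (x : ℂ)))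

/-- The semigroup `e^{-t|∇|³}` defined via Fourier series. -/
def expSemigroup (t : ℝ) (f : ℝ → ℝ) (s : ℝ) : ℝ :=
  ∑' n : ℤ, Real.exp (-t * |(n : ℝ)|^3) *
    (fourierCoef f n * Complex.exp (Complex.I * (n : ℂ) * (s : ℂ))).re

/-- Membership in the little Hölder space `h^{1,γ}`, the closure of smooth
2π-periodic functions in the `C^{1,γ}` norm. -/
def MemLittleHolder (γ : ℝ) (f : ℝ → ℝ) : Prop :=
  Function.Periodic f (2*π) ∧ MemCkg 1 γ f ∧
  ∀ ε > 0, ∃ g : ℝ → ℝ, ContDiff ℝ (⊤ : ℕ∞) g ∧ Function.Periodic g (2*π) ∧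
    CkgNorm 1 γ (fun s => f s - g s) ≤ ε

/-- The 2D Stokeslet `G(x) = (1/4π)(-log|x| I + x⊗x/|x|²)`. -/
def stokeslet (x : R2) : Matrix (Fin 2) (Fin 2) ℝ :=
  Matrix.of fun i j =>
    (1/(4*π)) * ((-Real.log ‖x‖) * (if i = j then 1 else 0) + x i * x j / ‖x‖^2)

/-- The interface force `F = (∂³φ + ½(1+∂φ)³) n + ∂_s(σ τ)`. -/
def forceF (φ σ : ℝ → ℝ) (η : ℝ) : R2 :=
  (iteratedDeriv 3 φ η + (1/2) * (1 + deriv φ η)^3) • normalv φ η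
  + deriv (fun y => σ y • tangentv φ y) η

/-- The single layer velocity `u(s) = ∫_{S¹} G(X(s)-X(η)) F(η) dη`. -/
def singleLayer (φ σ : ℝ → ℝ) (s : ℝ) : R2 :=
  vec2 (∫ η in (0:ℝ)..(2*π),
          (stokeslet (curve φ s - curve φ η) 0 0 * forceF φ σ η 0
            + stokeslet (curve φ s - curve φ η) 0 1 * forceF φ σ η 1))
       (∫ η in (0:ℝ)..(2*π),
          (stokeslet (curve φ s - curve φ η) 1 0 * forceF φ σ η 0
            + stokeslet (curve φ s - curve φ η) 1 1 * forceF φ σ η 1))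

/-- Continuity of `t ↦ φ(t)` on `S` with values in `C^{k,γ}`. -/
def ContInCkg (k : ℕ) (γ : ℝ) (S : Set ℝ) (φ : ℝ → ℝ → ℝ) : Prop :=
  (∀ t ∈ S, MemCkg k γ (φ t)) ∧
  ∀ t ∈ S, Filter.Tendsto (fun t' => CkgNorm k γ (fun s => φ t' s - φ t s))
    (nhdsWithin t S) (nhds 0)

/-- Continuous differentiability of `t ↦ φ(t)` on `S` with values in `C^{k,γ}`. -/
def C1InCkg (k : ℕ) (γ : ℝ) (S : Set ℝ) (φ : ℝ → ℝ → ℝ) : Prop :=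
  ContInCkg k γ S φ ∧ ∃ ψ : ℝ → ℝ → ℝ, ContInCkg k γ S ψ ∧
    ∀ t ∈ S, Filter.Tendsto
      (fun t' => CkgNorm k γ (fun s => (φ t' s - φ t s) / (t' - t) - ψ t s))
      (nhdsWithin t (S \ {t})) (nhds 0)

/-- The evolution and tension (inextensibility) equations hold pointwise. -/
def SatisfiesPDE (T : ℝ) (φ σ : ℝ → ℝ → ℝ) : Prop :=
  ∀ t ∈ Set.Ioc (0:ℝ) T, ∀ s : ℝ,
    deriv (fun t' => φ t' s) t
      = -(inner ℝ (normalv (φ t) s) (deriv (fun s' => singleLayer (φ t) (σ t) s') s) : ℝ) ∧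
    (0 : ℝ) = (inner ℝ (tangentv (φ t) s) (deriv (fun s' => singleLayer (φ t) (σ t) s') s) : ℝ)

/-- Strong solution of the inextensible interface problem (Definition 1.2). -/
def IsStrongSolution (γ T : ℝ) (φ₀ : ℝ → ℝ) (φ σ : ℝ → ℝ → ℝ) : Prop :=
  (∀ t ∈ Set.Ioc (0:ℝ) T, Function.Periodic (φ t) (2*π) ∧ Function.Periodic (σ t) (2*π)) ∧
  C1InCkg 1 γ (Set.Ioc 0 T) φ ∧
  ContInCkg 4 γ (Set.Ioc 0 T) φ ∧
  ContInCkg 2 γ (Set.Ioc 0 T) σ ∧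
  SatisfiesPDE T φ σ ∧
  φ 0 = φ₀ ∧
  (∀ t ∈ Set.Icc (0:ℝ) T, 0 < arcChordPhi (φ t)) ∧
  Filter.Tendsto (fun t => CkgNorm 1 γ (fun s => φ t s - φ₀ s))
    (nhdsWithin 0 (Set.Ioi 0)) (nhds 0)

end

noncomputable section

/-- `Cφ` is a resolvent constant for `φ`: any solution `ψ ∈ C^{1,α}` of the tension
equation `¼|∇|ψ + M(φ)ψ = G` with datum `G ∈ C^{0,α}` satisfies
`‖ψ‖_{C^{1,α}} ≤ Cφ ‖G‖_{C^{0,α}}`. -/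
def ResolventBound (α : ℝ) (φ : ℝ → ℝ) (Cφ : ℝ) : Prop :=
  ∀ ψ G : ℝ → ℝ, Function.Periodic ψ (2*π) → Function.Periodic G (2*π) →
    MemCkg 1 α ψ → MemCkg 0 α G →
    (∀ s : ℝ, (1/4) * hilbertT (deriv ψ) s + Mop φ ψ s = G s) →
    CkgNorm 1 α ψ ≤ Cφ * CkgNorm 0 α G

end
section InterpAux


lemma C0Norm_nonneg (f : ℝ → ℝ) : 0 ≤ C0Norm f :=
  Real.iSup_nonneg fun s => norm_nonneg _

lemma periodic_deriv' {f : ℝ → ℝ} {c : ℝ} (hf : Function.Periodic f c) :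
    Function.Periodic (deriv f) c := by
  intro x
  have h : (fun y => f (y + c)) = f := funext fun y => hf y
  rw [← deriv_comp_add_const f c x, h]

lemma periodic_iteratedDeriv {f : ℝ → ℝ} {c : ℝ} (hf : Function.Periodic f c) (n : ℕ) :
    Function.Periodic (iteratedDeriv n f) c := by
  induction n with
  | zero => simpa [iteratedDeriv_zero] using hf
  | succ n ih => rw [iteratedDeriv_succ]; exact periodic_deriv' ih

lemma bdd_of_periodic {f : ℝ → ℝ} (hc : Continuous f) (hp : Function.Periodic f (2*π)) :
    BddAbove (Set.range fun s => ‖f s‖) := by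
  have h2π : (0:ℝ) < 2*π := by positivity
  obtain ⟨M, hM⟩ := (isCompact_Icc (a := (0:ℝ)) (b := 2*π)).bddAbove_image
    (hc.norm.continuousOn)
  refine ⟨M, ?_⟩
  rintro x ⟨s, rfl⟩
  obtain ⟨y, hy, hxy⟩ := hp.exists_mem_Ico₀ h2π s
  simp only [hxy]
  exact hM ⟨y, ⟨hy.1, hy.2.le⟩, rfl⟩

lemma le_C0Norm {f : ℝ → ℝ} (hc : Continuous f) (hp : Function.Periodic f (2*π)) (s : ℝ) :
    |f s| ≤ C0Norm f :=
  le_ciSup (bdd_of_periodic hc hp) s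

lemma C0Norm_le {f : ℝ → ℝ} {M : ℝ} (hM : 0 ≤ M) (h : ∀ s, |f s| ≤ M) : C0Norm f ≤ M :=
  Real.iSup_le h hM

lemma landau {g : ℝ → ℝ} (hp : Function.Periodic g (2*π))
    (hd1 : Differentiable ℝ g) (hd2 : Differentiable ℝ (deriv g))
    (hc2 : Continuous (deriv (deriv g))) :
    C0Norm (deriv g) ^ 2 ≤ 9 * C0Norm g * C0Norm (deriv (deriv g)) := by
  set M := C0Norm g with hM
  set K := C0Norm (deriv (deriv g)) with hK
  have hM0 : 0 ≤ M := C0Norm_nonneg g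
  have hK0 : 0 ≤ K := C0Norm_nonneg _
  have hpc : Continuous g := hd1.continuous
  have hp1 : Function.Periodic (deriv g) (2*π) := periodic_deriv' hp
  have hp2 : Function.Periodic (deriv (deriv g)) (2*π) := periodic_deriv' hp1
  have hgb : ∀ s, |g s| ≤ M := le_C0Norm hpc hp
  have hg2b : ∀ s, |deriv (deriv g) s| ≤ K := le_C0Norm hc2 hp2
  -- pointwise bound
  have key : ∀ s : ℝ, ∀ h : ℝ, 0 < h → |deriv g s| ≤ 2*M/h + K*h := by
    intro s h hh
    have hdiff : ∀ u v : ℝ, |deriv g u - deriv g v| ≤ K * |u - v| := by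
      intro u v
      have : ∫ x in v..u, deriv (deriv g) x = deriv g u - deriv g v :=
        intervalIntegral.integral_deriv_eq_sub (fun x _ => hd2 x)
          (hc2.intervalIntegrable v u)
      rw [← this]
      have := intervalIntegral.norm_integral_le_of_norm_le_const
        (C := K) (f := deriv (deriv g)) (a := v) (b := u) (fun x _ => hg2b x)
      simpa [Real.norm_eq_abs, abs_sub_comm u v] using this
    have hint : ∫ u in s..(s+h), deriv g u = g (s+h) - g s :=
      intervalIntegral.integral_deriv_eq_sub (fun x _ => hd1 x)
        (hd2.continuous.intervalIntegrable s (s+h))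
    have hsplit : ∫ u in s..(s+h), (deriv g u - deriv g s)
        = (g (s+h) - g s) - h * deriv g s := by
      rw [intervalIntegral.integral_sub ((hd2.continuous.intervalIntegrable s (s+h)))
        (intervalIntegrable_const), hint, intervalIntegral.integral_const]
      simp [smul_eq_mul]
    have hbd : |(g (s+h) - g s) - h * deriv g s| ≤ (K*h) * h := by
      rw [← hsplit]
      have := intervalIntegral.norm_integral_le_of_norm_le_const
        (C := K*h) (f := fun u => deriv g u - deriv g s) (a := s) (b := s+h) ?_
      · simpa [Real.norm_eq_abs, abs_of_pos hh] using this
      · intro x hx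
        rw [Set.uIoc_of_le (by linarith)] at hx
        have : |x - s| ≤ h := by
          rw [abs_of_pos (by linarith [hx.1])]
          linarith [hx.2]
        calc ‖deriv g x - deriv g s‖ ≤ K * |x - s| := hdiff x s
          _ ≤ K * h := by nlinarith
    have h1 : |h * deriv g s| ≤ |g (s+h) - g s| + K*h*h := by
      have := abs_sub_abs_le_abs_sub (h * deriv g s) (g (s+h) - g s)
      have h2 : |h * deriv g s - (g (s+h) - g s)| ≤ K*h*h := by
        rw [abs_sub_comm]; exact hbd
      linarith
    have h3 : |g (s+h) - g s| ≤ 2*M := by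
      calc |g (s+h) - g s| ≤ |g (s+h)| + |g s| := abs_sub _ _
        _ ≤ 2*M := by linarith [hgb (s+h), hgb s]
    rw [abs_mul, abs_of_pos hh] at h1
    rw [div_add' _ _ _ (ne_of_gt hh)]
    rw [le_div_iff₀ hh]
    nlinarith
  -- now optimize
  rcases eq_or_lt_of_le hM0 with hMz | hMpos
  · -- M = 0 : g ≡ 0 hence deriv g ≡ 0
    have hg0 : ∀ s, g s = 0 := fun s => abs_eq_zero.mp (le_antisymm (by rw [hMz]; exact hgb s) (abs_nonneg _))
    have : deriv g = fun _ => (0:ℝ) := by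
      have : g = fun _ => (0:ℝ) := funext hg0
      rw [this]; ext x; simp
    rw [this]
    have : C0Norm (fun _ : ℝ => (0:ℝ)) = 0 := by
      apply le_antisymm (C0Norm_le le_rfl (by simp)) (C0Norm_nonneg _)
    rw [this]
    nlinarith
  rcases eq_or_lt_of_le hK0 with hKz | hKpos
  · -- K = 0 : deriv g ≡ 0
    have : ∀ s, deriv g s = 0 := by
      intro s
      by_contra hne
      have hpos : 0 < |deriv g s| := abs_pos.mpr hne
      have := key s (4*M/|deriv g s|) (by positivity)
      rw [← hKz] at this
      have h4 : 2*M/(4*M/|deriv g s|) = |deriv g s|/2 := by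
        field_simp; ring
      rw [h4] at this
      linarith
    have hz : deriv g = fun _ => (0:ℝ) := funext this
    rw [hz]
    have : C0Norm (fun _ : ℝ => (0:ℝ)) = 0 := by
      apply le_antisymm (C0Norm_le le_rfl (by simp)) (C0Norm_nonneg _)
    rw [this]
    nlinarith
  -- main case
  have hh : 0 < Real.sqrt M / Real.sqrt K := by positivity
  have hbound : ∀ s, |deriv g s| ≤ 3 * (Real.sqrt M * Real.sqrt K) := by
    intro s
    have := key s _ hh
    have e1 : 2*M/(Real.sqrt M / Real.sqrt K) = 2 * (Real.sqrt M * Real.sqrt K) := by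
      rw [div_div_eq_mul_div, div_eq_iff (by positivity)]
      linear_combination (-2*Real.sqrt K) * Real.sq_sqrt hM0
    have e2 : K * (Real.sqrt M / Real.sqrt K) = Real.sqrt M * Real.sqrt K := by
      rw [mul_div_assoc', div_eq_iff (by positivity)]
      linear_combination (-Real.sqrt M) * Real.sq_sqrt hK0
    rw [e1, e2] at this
    linarith
  have : C0Norm (deriv g) ≤ 3 * (Real.sqrt M * Real.sqrt K) :=
    C0Norm_le (by positivity) hbound
  calc C0Norm (deriv g)^2 ≤ (3 * (Real.sqrt M * Real.sqrt K))^2 := by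
        apply pow_le_pow_left₀ (C0Norm_nonneg _) this
    _ = 9 * M * K := by
        rw [mul_pow, mul_pow, Real.sq_sqrt hM0, Real.sq_sqrt hK0]; ring

lemma chain_lemma : ∀ m : ℕ, ∃ C : ℝ, 1 ≤ C ∧ ∀ a : ℕ → ℝ, (∀ i, 0 ≤ a i) →
    (∀ i, i + 2 ≤ m → a (i+1)^2 ≤ 9 * a i * a (i+2)) →
    ∀ j, j ≤ m → a j ^ m ≤ C * a 0 ^ (m - j) * a m ^ j := by
  intro m
  induction m with
  | zero =>
    exact ⟨1, le_rfl, fun a _ _ j hj => by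
      interval_cases j; simp⟩
  | succ m ih =>
    obtain ⟨C, hC1, hC⟩ := ih
    set D : ℝ := 9^m * C with hD
    have hD1 : 1 ≤ D := by
      have : (1:ℝ) ≤ 9^m := one_le_pow₀ (by norm_num)
      nlinarith
    refine ⟨C^(m+1) * D^m, ?_, ?_⟩
    · have h1 : (1:ℝ) ≤ C^(m+1) := one_le_pow₀ hC1
      have h2 : (1:ℝ) ≤ D^m := one_le_pow₀ hD1
      nlinarith
    set C' : ℝ := C^(m+1) * D^m with hC'
    have hC'1 : 1 ≤ C' := by
      have h1 : (1:ℝ) ≤ C^(m+1) := one_le_pow₀ hC1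
      have h2 : (1:ℝ) ≤ D^m := one_le_pow₀ hD1
      nlinarith
    intro a ha hch j hj
    have ha0 := ha 0
    have haj := ha j
    have ham := ha m
    have ham1 := ha (m+1)
    -- trivial cases
    rcases Nat.eq_zero_or_pos j with rfl | hj1
    · simp only [Nat.sub_zero, pow_zero, mul_one]
      nlinarith [pow_nonneg ha0 (m+1)]
    rcases eq_or_lt_of_le hj with rfl | hjm
    · simp only [Nat.sub_self, pow_zero, mul_one]
      nlinarith [pow_nonneg (ha (m+1)) (m+1)]
    have hjm' : j ≤ m := Nat.lt_succ_iff.mp hjm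
    have hm1 : 1 ≤ m := le_trans hj1 hjm'
    -- IH applications
    have hch' : ∀ i, i + 2 ≤ m → a (i+1)^2 ≤ 9 * a i * a (i+2) :=
      fun i hi => hch i (le_trans hi (Nat.le_succ m))
    have h1 : a j ^ m ≤ C * a 0 ^ (m - j) * a m ^ j := hC a ha hch' j hjm'
    have h4 : a (m-1) ^ m ≤ C * a 0 ^ 1 * a m ^ (m-1) := by
      have := hC a ha hch' (m-1) (Nat.sub_le m 1)
      have e : m - (m-1) = 1 := by omega
      rwa [e] at this
    -- bound a m ^ (m+1)
    have h3 : a m ^ 2 ≤ 9 * a (m-1) * a (m+1) := by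
      have := hch (m-1) (by omega)
      have e : m - 1 + 1 = m := by omega
      have e2 : m - 1 + 2 = m + 1 := by omega
      rwa [e, e2] at this
    have h2 : a m ^ (m+1) ≤ D * a 0 * a (m+1) ^ m := by
      have step : a m ^ (2*m) ≤ D * a 0 * a (m+1) ^ m * a m ^ (m-1) := by
        calc a m ^ (2*m) = (a m ^ 2) ^ m := by rw [← pow_mul]
          _ ≤ (9 * a (m-1) * a (m+1)) ^ m := by
              apply pow_le_pow_left₀ (by positivity) h3
          _ = 9^m * a (m-1) ^ m * a (m+1) ^ m := by rw [mul_pow, mul_pow]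
          _ ≤ 9^m * (C * a 0 ^ 1 * a m ^ (m-1)) * a (m+1) ^ m := by
              have h9 : (0:ℝ) ≤ 9^m := by positivity
              have hw : (0:ℝ) ≤ a (m+1)^m := by positivity
              nlinarith [mul_le_mul_of_nonneg_left h4 h9]
          _ = D * a 0 * a (m+1) ^ m * a m ^ (m-1) := by rw [hD]; ring
      rcases eq_or_lt_of_le ham with hz | hpos
      · have : a m ^ (m+1) = 0 := by rw [← hz]; simp
        rw [this]; positivity
      · have hcan : (0:ℝ) < a m ^ (m-1) := by positivity
        have e : 2*m = (m+1) + (m-1) := by omega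
        rw [e, pow_add] at step
        exact le_of_mul_le_mul_right step hcan
    -- combine
    obtain ⟨d, hd'⟩ : ∃ d, m = j + d := ⟨m - j, by omega⟩
    subst hd'
    have hsub1 : j + d - j = d := by omega
    have hsub2 : j + d + 1 - j = d + 1 := by omega
    rw [hsub2]
    rw [hsub1] at h1
    -- h1 : a j ^ (j+d) ≤ C * a 0 ^ d * a (j+d) ^ j
    -- h2 : a (j+d) ^ (j+d+1) ≤ D * a 0 * a (j+d+1) ^ (j+d)
    set x := a j
    set y := a 0
    set z := a (j+d)
    set w := a (j+d+1)
    set n := j + d with hn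
    have hx : 0 ≤ x := haj
    have hy : 0 ≤ y := ha0
    have hz : 0 ≤ z := ham
    have hw : 0 ≤ w := ham1
    -- goal : x ^ (n+1) ≤ C' * y ^ (d+1) * w ^ j
    have big : x ^ (n*(n+1)) ≤ C' * (y^(d+1) * w^j)^n := by
      calc x ^ (n*(n+1)) = (x^n)^(n+1) := by rw [← pow_mul]
        _ ≤ (C * y^d * z^j)^(n+1) := by
            apply pow_le_pow_left₀ (by positivity) h1
        _ = C^(n+1) * y^(d*(n+1)) * (z^(n+1))^j := by
            rw [mul_pow, mul_pow, ← pow_mul, ← pow_mul, mul_comm j (n+1), pow_mul, pow_mul]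
        _ ≤ C^(n+1) * y^(d*(n+1)) * (D * y * w^n)^j := by
            have : (z^(n+1))^j ≤ (D * y * w^n)^j := by
              apply pow_le_pow_left₀ (by positivity) h2
            have hc : (0:ℝ) ≤ C^(n+1) * y^(d*(n+1)) := by
              have : (0:ℝ) ≤ C := le_trans zero_le_one hC1
              positivity
            exact mul_le_mul_of_nonneg_left this hc
        _ = (C^(n+1) * D^j) * (y^(d*(n+1) + j) * w^(n*j)) := by
            rw [mul_pow, mul_pow, ← pow_mul, pow_add]
            ring
        _ ≤ C' * (y^(d+1) * w^j)^n := by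
            have hDj : D^j ≤ D^n := pow_le_pow_right₀ hD1 (by omega)
            have hCn : (0:ℝ) ≤ C^(n+1) := pow_nonneg (le_trans zero_le_one hC1) _
            have hyw : (0:ℝ) ≤ y^(d*(n+1) + j) * w^(n*j) := by positivity
            have e : y^(d*(n+1) + j) * w^(n*j) = (y^(d+1) * w^j)^n := by
              rw [mul_pow, ← pow_mul, ← pow_mul]
              congr 2 <;> · rw [hn]; ring
            rw [← e, hC']
            apply mul_le_mul_of_nonneg_right _ hyw
            exact mul_le_mul_of_nonneg_left hDj hCn
    have hn1 : 1 ≤ n := le_trans hj1 (by omega)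
    have big2 : (x^(n+1))^n ≤ (C' * (y^(d+1) * w^j))^n := by
      have e : (x^(n+1))^n = x^(n*(n+1)) := by rw [← pow_mul]; ring_nf
      rw [e, mul_pow]
      refine le_trans big ?_
      apply mul_le_mul_of_nonneg_right (le_self_pow₀ hC'1 (by omega)) (by positivity)
    have := (pow_le_pow_iff_left₀ (by positivity) (by positivity) (by omega : n ≠ 0)).mp big2
    calc x ^ (n+1) ≤ C' * (y^(d+1) * w^j) := this
      _ = C' * y^(d+1) * w^j := by ring

lemma CkNorm_nonneg (n : ℕ) (f : ℝ → ℝ) : 0 ≤ CkNorm n f := by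
  unfold CkNorm
  have h1 := C0Norm_nonneg f
  have h2 : (0:ℝ) ≤ ∑ ℓ ∈ Finset.Icc 1 n, C0Norm (iteratedDeriv ℓ f) :=
    Finset.sum_nonneg fun ℓ _ => C0Norm_nonneg _
  linarith

lemma C0Norm_iteratedDeriv_le_CkNorm (n ℓ : ℕ) (hℓ : ℓ ≤ n) (f : ℝ → ℝ) :
    C0Norm (iteratedDeriv ℓ f) ≤ CkNorm n f := by
  unfold CkNorm
  have h2 : (0:ℝ) ≤ ∑ j ∈ Finset.Icc 1 n, C0Norm (iteratedDeriv j f) :=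
    Finset.sum_nonneg fun j _ => C0Norm_nonneg _
  rcases Nat.eq_zero_or_pos ℓ with rfl | hpos
  · rw [iteratedDeriv_zero]; linarith
  · have : C0Norm (iteratedDeriv ℓ f) ≤ ∑ j ∈ Finset.Icc 1 n, C0Norm (iteratedDeriv j f) :=
      Finset.single_le_sum (f := fun j => C0Norm (iteratedDeriv j f)) (fun j _ => C0Norm_nonneg _) (Finset.mem_Icc.mpr ⟨hpos, hℓ⟩)
    linarith [C0Norm_nonneg f]

lemma CkNorm_mono {n n' : ℕ} (h : n ≤ n') (f : ℝ → ℝ) : CkNorm n f ≤ CkNorm n' f := by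
  unfold CkNorm
  have : ∑ ℓ ∈ Finset.Icc 1 n, C0Norm (iteratedDeriv ℓ f)
      ≤ ∑ ℓ ∈ Finset.Icc 1 n', C0Norm (iteratedDeriv ℓ f) :=
    Finset.sum_le_sum_of_subset_of_nonneg
      (Finset.Icc_subset_Icc le_rfl h) (fun j _ _ => C0Norm_nonneg _)
  linarith

end InterpAux

/-- **Lemma 2.1(1) (interpolation, integer case).** For `0 ≤ k₁ < k₂` and `k₁ ≤ k ≤ k₂`,
`‖f‖_{C^k} ≤ C ‖f‖_{C^{k₁}}^{(k₂-k)/(k₂-k₁)} ‖f‖_{C^{k₂}}^{(k-k₁)/(k₂-k₁)}`. -/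
theorem interpolation_integer (k₁ k₂ k : ℕ) (h₁ : k₁ < k₂) (h₂ : k₁ ≤ k) (h₃ : k ≤ k₂) :
    ∃ C > 0, ∀ f : ℝ → ℝ, Function.Periodic f (2*π) → ContDiff ℝ k₂ f →
      CkNorm k f ≤ C * CkNorm k₁ f ^ (((k₂:ℝ) - k) / ((k₂:ℝ) - k₁))
        * CkNorm k₂ f ^ (((k:ℝ) - k₁) / ((k₂:ℝ) - k₁)) := by
  have hden : (0:ℝ) < (k₂:ℝ) - (k₁:ℝ) := by
    have : (k₁:ℝ) < k₂ := by exact_mod_cast h₁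
    linarith
  rcases eq_or_lt_of_le h₃ with rfl | hkk₂
  · -- k = k₂
    refine ⟨1, one_pos, fun f hper hcd => ?_⟩
    have e1 : ((k:ℝ) - k) / ((k:ℝ) - k₁) = 0 := by simp
    have e2 : ((k:ℝ) - k₁) / ((k:ℝ) - k₁) = 1 := div_self (ne_of_gt hden)
    rw [e1, e2, Real.rpow_zero, Real.rpow_one]
    linarith [CkNorm_nonneg k f]
  -- main case : k < k₂
  set m : ℕ := k₂ - k₁ with hm
  have hm1 : 1 ≤ m := by omega
  have hmR : (m:ℝ) = (k₂:ℝ) - k₁ := by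
    rw [hm]; exact_mod_cast Nat.cast_sub (le_of_lt h₁)
  have hmR0 : (0:ℝ) < (m:ℝ) := by rw [hmR]; exact hden
  obtain ⟨Cc, hCc1, hCc⟩ := chain_lemma m
  refine ⟨(k+1) * Cc, by positivity, fun f hper hcd => ?_⟩
  set A := CkNorm k₁ f with hA
  set B := CkNorm k₂ f with hB
  have hA0 : 0 ≤ A := CkNorm_nonneg k₁ f
  have hB0 : 0 ≤ B := CkNorm_nonneg k₂ f
  have hAB : A ≤ B := CkNorm_mono (le_of_lt h₁) f
  set a : ℕ → ℝ := fun ℓ => C0Norm (iteratedDeriv ℓ f) with ha_def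
  have ha : ∀ i, 0 ≤ a i := fun i => C0Norm_nonneg _
  -- chain hypothesis via Landau
  have hch : ∀ i, i + 2 ≤ m → a (k₁ + i + 1) ^ 2 ≤ 9 * a (k₁ + i) * a (k₁ + i + 2) := by
    intro i hi
    have e1 : deriv (iteratedDeriv (k₁ + i) f) = iteratedDeriv (k₁ + i + 1) f :=
      (iteratedDeriv_succ).symm
    have e2 : deriv (deriv (iteratedDeriv (k₁ + i) f)) = iteratedDeriv (k₁ + i + 2) f := by
      rw [e1]; exact (iteratedDeriv_succ).symm
    have hd1 : Differentiable ℝ (iteratedDeriv (k₁ + i) f) := by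
      apply hcd.differentiable_iteratedDeriv
      exact_mod_cast (by omega : k₁ + i < k₂)
    have hd2 : Differentiable ℝ (deriv (iteratedDeriv (k₁ + i) f)) := by
      rw [e1]
      apply hcd.differentiable_iteratedDeriv
      exact_mod_cast (by omega : k₁ + i + 1 < k₂)
    have hc2 : Continuous (deriv (deriv (iteratedDeriv (k₁ + i) f))) := by
      rw [e2]
      apply hcd.continuous_iteratedDeriv
      exact_mod_cast (by omega : k₁ + i + 2 ≤ k₂)
    have := landau (periodic_iteratedDeriv hper (k₁ + i)) hd1 hd2 hc2
    rw [e2, e1] at this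
    exact this
  -- key estimate from chain lemma
  have key1 : ∀ j, j ≤ m → a (k₁ + j) ^ m ≤ Cc * A ^ (m - j) * B ^ j := by
    intro j hj
    have := hCc (fun i => a (k₁ + i)) (fun i => ha _) hch j hj
    simp only [Nat.add_zero] at this
    have ekm : k₁ + m = k₂ := by omega
    rw [ekm] at this
    have hk₁A : a k₁ ≤ A := C0Norm_iteratedDeriv_le_CkNorm k₁ k₁ le_rfl f
    have hk₂B : a k₂ ≤ B := C0Norm_iteratedDeriv_le_CkNorm k₂ k₂ le_rfl f
    calc a (k₁ + j) ^ m ≤ Cc * a k₁ ^ (m - j) * a k₂ ^ j := this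
      _ ≤ Cc * A ^ (m - j) * B ^ j := by
          have hCc0 : (0:ℝ) ≤ Cc := le_trans zero_le_one hCc1
          have s1 : a k₁ ^ (m-j) ≤ A ^ (m-j) := pow_le_pow_left₀ (ha k₁) hk₁A _
          have s2 : a k₂ ^ j ≤ B ^ j := pow_le_pow_left₀ (ha k₂) hk₂B _
          exact mul_le_mul (mul_le_mul le_rfl s1 (pow_nonneg (ha k₁) _) hCc0) s2
            (pow_nonneg (ha k₂) _) (mul_nonneg hCc0 (pow_nonneg hA0 _))
  set θ₂ : ℝ := ((k₂:ℝ) - k) / ((k₂:ℝ) - k₁) with hθ₂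
  set θ : ℝ := ((k:ℝ) - k₁) / ((k₂:ℝ) - k₁) with hθ
  have hkR : (k₁:ℝ) ≤ k ∧ (k:ℝ) < k₂ := ⟨by exact_mod_cast h₂, by exact_mod_cast hkk₂⟩
  have hθ0 : 0 ≤ θ := div_nonneg (by linarith [hkR.1]) (le_of_lt hden)
  have hθ₂pos : 0 < θ₂ := div_pos (by linarith [hkR.2]) hden
  have hsum : θ₂ = 1 - θ := by
    rw [hθ₂, hθ]
    field_simp
    ring
  rcases lt_or_eq_of_le hA0 with hApos | hAz
  swap
  · -- A = 0
    have hℓ0 : ∀ ℓ, ℓ ≤ k → a ℓ = 0 := by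
      intro ℓ hℓ
      rcases le_or_gt ℓ k₁ with hc | hc
      · have := C0Norm_iteratedDeriv_le_CkNorm k₁ ℓ hc f
        have h0 := ha ℓ
        rw [← hA, ← hAz] at this
        linarith
      · set j := ℓ - k₁ with hj
        have hjm : j ≤ m := by omega
        have := key1 j hjm
        have ej : k₁ + j = ℓ := by omega
        rw [ej, ← hAz] at this
        have hmj : m - j ≠ 0 := by omega
        rw [zero_pow hmj] at this
        have : a ℓ ^ m ≤ 0 := by
          have hBj : (0:ℝ) ≤ B ^ j := by positivity
          nlinarith
        have : a ℓ ^ m = 0 := le_antisymm this (pow_nonneg (ha ℓ) m)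
        exact pow_eq_zero_iff (by omega : m ≠ 0) |>.mp this
    have hCk0 : CkNorm k f = 0 := by
      unfold CkNorm
      have h0 : C0Norm f = 0 := by
        have := hℓ0 0 (Nat.zero_le k)
        simpa only [ha_def, iteratedDeriv_zero] using this
      rw [h0, Finset.sum_eq_zero, add_zero]
      intro ℓ hℓ
      exact hℓ0 ℓ (Finset.mem_Icc.mp hℓ).2
    rw [hCk0, ← hAz, Real.zero_rpow (ne_of_gt hθ₂pos)]
    simp
  -- A > 0
  have hBpos : 0 < B := lt_of_lt_of_le hApos hAB
  have hBA1 : 1 ≤ B / A := (one_le_div hApos).mpr hAB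
  have interp : ∀ u : ℝ, 0 ≤ u → u ≤ θ → A ^ (1 - u) * B ^ u ≤ A ^ θ₂ * B ^ θ := by
    intro u hu0 huθ
    have e : ∀ v : ℝ, A ^ ((1:ℝ) - v) * B ^ v = A * (B / A) ^ v := by
      intro v
      rw [Real.div_rpow hB0 (le_of_lt hApos), Real.rpow_sub hApos, Real.rpow_one]
      have := (Real.rpow_pos_of_pos hApos v).ne'
      field_simp
    rw [e u, hsum, e θ]
    have := Real.rpow_le_rpow_of_exponent_le hBA1 huθ
    nlinarith [Real.rpow_pos_of_pos (div_pos hBpos hApos) u]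
  have bound : ∀ ℓ, ℓ ≤ k → a ℓ ≤ Cc * (A ^ θ₂ * B ^ θ) := by
    intro ℓ hℓ
    have hX0 : 0 < A ^ θ₂ * B ^ θ := by
      have := Real.rpow_pos_of_pos hApos θ₂
      have := Real.rpow_pos_of_pos hBpos θ
      positivity
    rcases le_or_gt ℓ k₁ with hc | hc
    · have h1 : a ℓ ≤ A := by
        have := C0Norm_iteratedDeriv_le_CkNorm k₁ ℓ hc f
        rwa [← hA] at this
      have h2 : A = A ^ ((1:ℝ) - 0) * B ^ (0:ℝ) := by
        rw [sub_zero, Real.rpow_one, Real.rpow_zero, mul_one]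
      have h3 := interp 0 le_rfl hθ0
      rw [← h2] at h3
      nlinarith
    · set j := ℓ - k₁ with hj
      have hjm : j ≤ m := by omega
      have hkey := key1 j hjm
      have ej : k₁ + j = ℓ := by omega
      rw [ej] at hkey
      -- take m-th root
      have hRHS0 : (0:ℝ) ≤ Cc * A ^ (m - j) * B ^ j := by
        have : (0:ℝ) ≤ Cc := le_trans zero_le_one hCc1
        positivity
      have h5 : a ℓ ≤ (Cc * A ^ (m - j) * B ^ j) ^ ((1:ℝ)/m) := by
        have := Real.rpow_le_rpow (pow_nonneg (ha ℓ) m) hkey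
          (by positivity : (0:ℝ) ≤ 1/(m:ℝ))
        rwa [← Real.rpow_natCast (a ℓ) m, ← Real.rpow_mul (ha ℓ), mul_one_div,
          div_self (ne_of_gt hmR0), Real.rpow_one] at this
      have hsplit : (Cc * A ^ (m - j) * B ^ j) ^ ((1:ℝ)/m)
          = Cc ^ ((1:ℝ)/m) * A ^ (((m:ℝ) - j)/m) * B ^ ((j:ℝ)/m) := by
        have hCc0 : (0:ℝ) ≤ Cc := le_trans zero_le_one hCc1
        rw [Real.mul_rpow (by positivity) (by positivity),
          Real.mul_rpow hCc0 (by positivity),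
          ← Real.rpow_natCast A (m - j), ← Real.rpow_natCast B j,
          ← Real.rpow_mul hA0, ← Real.rpow_mul hB0]
        have ecast : ((m - j : ℕ) : ℝ) = (m:ℝ) - j := Nat.cast_sub hjm
        rw [ecast]
        ring_nf
      rw [hsplit] at h5
      have h6 : Cc ^ ((1:ℝ)/m) ≤ Cc := by
        have : Cc ^ ((1:ℝ)/m) ≤ Cc ^ (1:ℝ) :=
          Real.rpow_le_rpow_of_exponent_le hCc1 (by
            rw [div_le_one hmR0]
            exact_mod_cast Nat.one_le_cast.mpr hm1)
        rwa [Real.rpow_one] at this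
      have h7 : A ^ (((m:ℝ) - j)/m) * B ^ ((j:ℝ)/m) ≤ A ^ θ₂ * B ^ θ := by
        have e : ((m:ℝ) - j)/m = 1 - (j:ℝ)/m := by field_simp
        rw [e]
        apply interp
        · positivity
        · rw [hθ, hmR]
          have hjk : j + k₁ ≤ k := by omega
          have hjkR : (j:ℝ) + k₁ ≤ (k:ℝ) := by exact_mod_cast hjk
          exact (div_le_div_iff_of_pos_right hden).mpr (by linarith)
      calc a ℓ ≤ Cc ^ ((1:ℝ)/m) * A ^ (((m:ℝ) - j)/m) * B ^ ((j:ℝ)/m) := h5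
        _ = Cc ^ ((1:ℝ)/m) * (A ^ (((m:ℝ) - j)/m) * B ^ ((j:ℝ)/m)) := by ring
        _ ≤ Cc * (A ^ θ₂ * B ^ θ) := by
            apply mul_le_mul h6 h7
            · exact mul_nonneg (Real.rpow_nonneg hA0 _) (Real.rpow_nonneg hB0 _)
            · exact le_trans zero_le_one hCc1
  -- sum up
  have h00 : C0Norm f = a 0 := by simp only [ha_def, iteratedDeriv_zero]
  have t1 : C0Norm f ≤ Cc * (A ^ θ₂ * B ^ θ) := by
    rw [h00]; exact bound 0 (Nat.zero_le k)
  have t2 : ∑ ℓ ∈ Finset.Icc 1 k, C0Norm (iteratedDeriv ℓ f)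
      ≤ (k:ℝ) * (Cc * (A ^ θ₂ * B ^ θ)) := by
    calc ∑ ℓ ∈ Finset.Icc 1 k, C0Norm (iteratedDeriv ℓ f)
        ≤ ∑ _ℓ ∈ Finset.Icc 1 k, Cc * (A ^ θ₂ * B ^ θ) :=
          Finset.sum_le_sum fun ℓ hℓ => bound ℓ (Finset.mem_Icc.mp hℓ).2
      _ = (k:ℝ) * (Cc * (A ^ θ₂ * B ^ θ)) := by
          rw [Finset.sum_const, Nat.card_Icc, nsmul_eq_mul]
          norm_num
  have egoal : ((k:ℝ)+1) * Cc * A ^ θ₂ * B ^ θ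
      = Cc * (A ^ θ₂ * B ^ θ) + (k:ℝ) * (Cc * (A ^ θ₂ * B ^ θ)) := by ring
  show C0Norm f + ∑ ℓ ∈ Finset.Icc 1 k, C0Norm (iteratedDeriv ℓ f)
      ≤ ((k:ℝ)+1) * Cc * A ^ θ₂ * B ^ θ
  rw [egoal]
  linarith
end

section
/- Let γ ∈ (0,1), T > 0, and let f : [0,T] → (2π-periodic functions) satisfy ‖f‖_{X(T)} < ∞ (in particular f(t) ∈ C^{4,γ} for every t ∈ (0,T]). If α ∈ [0,3] and γ+α is not an integer, then there is a constant C = C(γ,α) such that for all t ∈ (0,T], ‖f(t)‖_{C^{1+γ+α}} ≤ C t^{−α/3} ‖f‖_{X(T)}. If γ+α ∈ ℤ, then for any δ ∈ (0, 3−α) there is C = C(γ,α,δ) such that for all t ∈ (0,T], ‖f(t)‖_{C^{1+γ+α}} ≤ C t^{−(α+δ)/3} ‖f‖_{X(T)}. -/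
open Real MeasureTheory Filter Set
open scoped RealInnerProductSpace

-- ====== auxiliary lemmas ======

noncomputable section

namespace XI

instance : Nonempty {q : ℝ × ℝ // q.1 ≠ q.2} := ⟨⟨(0, 1), by norm_num⟩⟩

lemma C0Norm_nonneg (f : ℝ → ℝ) : 0 ≤ C0Norm f :=
  Real.iSup_nonneg fun s => norm_nonneg _

lemma holderSemi_nonneg (μ : ℝ) (f : ℝ → ℝ) : 0 ≤ holderSemi μ f :=
  Real.iSup_nonneg fun p => div_nonneg (norm_nonneg _) (Real.rpow_nonneg (abs_nonneg _) _)

lemma CkNorm_nonneg (k : ℕ) (f : ℝ → ℝ) : 0 ≤ CkNorm k f :=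
  add_nonneg (C0Norm_nonneg f) (Finset.sum_nonneg fun _ _ => C0Norm_nonneg _)

lemma CkgNorm_nonneg (k : ℕ) (μ : ℝ) (f : ℝ → ℝ) : 0 ≤ CkgNorm k μ f :=
  add_nonneg (CkNorm_nonneg k f) (holderSemi_nonneg μ _)

lemma le_C0Norm {g : ℝ → ℝ} (hc : Continuous g) (hp : Function.Periodic g (2 * π)) (x : ℝ) :
    |g x| ≤ C0Norm g := by
  have hb : BddAbove (Set.range fun s => ‖g s‖) := by
    have hp' : Function.Periodic (fun s => ‖g s‖) (2 * π) := fun s => by simp [hp s]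
    have him := hp'.image_Icc (by positivity) 0
    rw [← him]
    exact (isCompact_Icc.image (continuous_norm.comp hc)).bddAbove
  simpa [C0Norm, Real.norm_eq_abs] using le_ciSup hb x

lemma C0Norm_le {g : ℝ → ℝ} {B : ℝ} (h : ∀ x, |g x| ≤ B) : C0Norm g ≤ B :=
  ciSup_le fun x => by simpa [Real.norm_eq_abs] using h x

lemma periodic_iteratedDeriv {f : ℝ → ℝ} (hp : Function.Periodic f (2 * π)) (n : ℕ) :
    Function.Periodic (iteratedDeriv n f) (2 * π) := by
  induction n with
  | zero => simpa [iteratedDeriv_zero] using hp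
  | succ n ih =>
    rw [iteratedDeriv_succ]
    intro x
    have : (fun y => iteratedDeriv n f (y + 2 * π)) = iteratedDeriv n f := funext fun y => ih y
    calc deriv (iteratedDeriv n f) (x + 2 * π)
        = deriv (fun y => iteratedDeriv n f (y + 2 * π)) x := (deriv_comp_add_const _ _ _).symm
      _ = deriv (iteratedDeriv n f) x := by rw [this]

lemma holderSemi_le {μ B : ℝ} {g : ℝ → ℝ}
    (h : ∀ x y : ℝ, x ≠ y → ‖g x - g y‖ / |x - y| ^ μ ≤ B) : holderSemi μ g ≤ B :=
  ciSup_le fun p => h p.1.1 p.1.2 p.2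

lemma le_holderSemi {μ : ℝ} (hμ : 0 < μ) {g : ℝ → ℝ} (hb : HolderBnd μ g) (x y : ℝ) :
    ‖g x - g y‖ ≤ holderSemi μ g * |x - y| ^ μ := by
  obtain ⟨C, hC⟩ := hb
  rcases eq_or_ne x y with rfl | hxy
  · simp [Real.zero_rpow hμ.ne']
  · have hd : (0:ℝ) < |x - y| := abs_pos.2 (sub_ne_zero.2 hxy)
    have hdp : (0:ℝ) < |x - y| ^ μ := Real.rpow_pos_of_pos hd μ
    have hb2 : BddAbove (Set.range fun p : {q : ℝ × ℝ // q.1 ≠ q.2} =>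
        ‖g p.val.1 - g p.val.2‖ / |p.val.1 - p.val.2| ^ μ) := by
      refine ⟨max C 0, ?_⟩
      rintro _ ⟨p, rfl⟩
      have hd' : (0:ℝ) < |p.val.1 - p.val.2| ^ μ :=
        Real.rpow_pos_of_pos (abs_pos.2 (sub_ne_zero.2 p.2)) μ
      exact le_max_of_le_left ((div_le_iff₀ hd').2 (hC _ _))
    have hle := le_ciSup hb2 (⟨(x, y), hxy⟩ : {q : ℝ × ℝ // q.1 ≠ q.2})
    calc ‖g x - g y‖ = ‖g x - g y‖ / |x - y| ^ μ * |x - y| ^ μ := by field_simp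
      _ ≤ holderSemi μ g * |x - y| ^ μ := mul_le_mul_of_nonneg_right hle hdp.le

lemma KL {g dg : ℝ → ℝ} (hd : ∀ x, HasDerivAt g (dg x) x) (hc : Continuous dg)
    {x h E : ℝ} (hh : 0 < h) (hE : ∀ u ∈ Set.Icc x (x + h), |dg u - dg x| ≤ E) :
    |dg x| ≤ |g (x + h) - g x| / h + E := by
  have hftc : ∫ u in x..(x + h), dg u = g (x + h) - g x :=
    intervalIntegral.integral_eq_sub_of_hasDerivAt (fun u _ => hd u)
      (hc.intervalIntegrable _ _)
  have hconst : ∫ _u in x..(x + h), dg x = h * dg x := by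
    simp [mul_comm]
  have hsub : ∫ u in x..(x + h), (dg x - dg u) = h * dg x - (g (x + h) - g x) := by
    rw [intervalIntegral.integral_sub (intervalIntegrable_const) (hc.intervalIntegrable _ _),
      hconst, hftc]
  have hbound : ‖∫ u in x..(x + h), (dg x - dg u)‖ ≤ E * |(x + h) - x| := by
    apply intervalIntegral.norm_integral_le_of_norm_le_const
    intro u hu
    have hu' : u ∈ Set.Icc x (x + h) := by
      have : u ∈ Set.Ioc x (x + h) := by
        rwa [Set.uIoc_of_le (by linarith)] at hu
      exact ⟨this.1.le, this.2⟩
    have := hE u hu'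
    rw [Real.norm_eq_abs, abs_sub_comm]
    exact this
  rw [hsub, Real.norm_eq_abs, show (x + h) - x = h by ring, abs_of_pos hh] at hbound
  have h1 : h * |dg x| ≤ |g (x + h) - g x| + E * h := by
    have : |h * dg x| ≤ |h * dg x - (g (x + h) - g x)| + |g (x + h) - g x| := by
      have := abs_add_le (h * dg x - (g (x + h) - g x)) (g (x + h) - g x)
      simpa using this
    rw [abs_mul, abs_of_pos hh] at this
    linarith
  rw [div_add' _ _ _ hh.ne', le_div_iff₀ hh]
  linarith

lemma diff_le {g dg : ℝ → ℝ} (hd : ∀ x, HasDerivAt g (dg x) x) (hc : Continuous dg)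
    {M : ℝ} (hM : ∀ u, |dg u| ≤ M) (x y : ℝ) : |g x - g y| ≤ M * |x - y| := by
  have hftc : ∫ u in y..x, dg u = g x - g y :=
    intervalIntegral.integral_eq_sub_of_hasDerivAt (fun u _ => hd u)
      (hc.intervalIntegrable _ _)
  have := intervalIntegral.norm_integral_le_of_norm_le_const (a := y) (b := x) (C := M)
    (f := dg) (fun u _ => by simpa [Real.norm_eq_abs] using hM u)
  rw [hftc, Real.norm_eq_abs] at this
  simpa [abs_sub_comm] using this

lemma holder_interp {g : ℝ → ℝ} {A B τ₁ τ₂ μ h : ℝ} (hA : 0 ≤ A) (hB : 0 ≤ B)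
    (hh : 0 < h) (hμ1 : μ ≤ τ₁) (hμ2 : τ₂ ≤ μ)
    (h₁ : ∀ x y : ℝ, ‖g x - g y‖ ≤ A * |x - y| ^ τ₁)
    (h₂ : ∀ x y : ℝ, ‖g x - g y‖ ≤ B * |x - y| ^ τ₂) :
    holderSemi μ g ≤ A * h ^ (τ₁ - μ) + B * h ^ (τ₂ - μ) := by
  apply holderSemi_le
  intro x y hxy
  have hd : 0 < |x - y| := abs_pos.2 (sub_ne_zero.2 hxy)
  have hdμ : 0 < |x - y| ^ μ := Real.rpow_pos_of_pos hd μ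
  rcases le_total |x - y| h with hle | hge
  · have key : ‖g x - g y‖ / |x - y| ^ μ ≤ A * |x - y| ^ (τ₁ - μ) := by
      rw [div_le_iff₀ hdμ, mul_assoc, ← Real.rpow_add hd, show τ₁ - μ + μ = τ₁ by ring]
      exact h₁ x y
    have h2 : |x - y| ^ (τ₁ - μ) ≤ h ^ (τ₁ - μ) :=
      Real.rpow_le_rpow hd.le hle (by linarith)
    have h3 := key.trans (mul_le_mul_of_nonneg_left h2 hA)
    have hpos : 0 ≤ B * h ^ (τ₂ - μ) := mul_nonneg hB (Real.rpow_nonneg hh.le _)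
    linarith
  · have key : ‖g x - g y‖ / |x - y| ^ μ ≤ B * |x - y| ^ (τ₂ - μ) := by
      rw [div_le_iff₀ hdμ, mul_assoc, ← Real.rpow_add hd, show τ₂ - μ + μ = τ₂ by ring]
      exact h₂ x y
    have h2 : |x - y| ^ (τ₂ - μ) ≤ h ^ (τ₂ - μ) :=
      Real.rpow_le_rpow_of_nonpos hh hge (by linarith)
    have h3 := key.trans (mul_le_mul_of_nonneg_left h2 hB)
    have hpos : 0 ≤ A * h ^ (τ₁ - μ) := mul_nonneg hA (Real.rpow_nonneg hh.le _)
    linarith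

lemma rpow_shift {h a b c : ℝ} (hh : 0 < h) (hsum : a + b = c) : h ^ a * h ^ b = h ^ c := by
  rw [← Real.rpow_add hh, hsum]

end XI

namespace XI

set_option maxHeartbeats 1000000 in
lemma core {γ α : ℝ} (hγ0 : 0 < γ) (hγ1 : γ < 1) (hα0 : 0 ≤ α) (hα3 : α ≤ 3)
    {f : ℝ → ℝ} (hper : Function.Periodic f (2 * π))
    (h1 : MemCkg 1 γ f) (h4 : MemCkg 4 γ f) :
    CkgNorm 1 γ f ≤ 3 * CkgNorm 4 γ f ∧
    ∀ h : ℝ, 0 < h → h ≤ 1 →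
      CrNorm (1 + γ + α) f ≤
        100000 * (CkgNorm 1 γ f * h ^ (-α) + CkgNorm 4 γ f * h ^ (3 - α)) := by
  obtain ⟨hcd, hHo4⟩ := h4
  obtain ⟨-, hHo1⟩ := h1
  set M : ℕ → ℝ := fun ℓ => C0Norm (iteratedDeriv ℓ f) with hMdef
  have hcont : ∀ ℓ : ℕ, ℓ ≤ 4 → Continuous (iteratedDeriv ℓ f) := fun ℓ hℓ =>
    hcd.continuous_iteratedDeriv ℓ (by exact_mod_cast hℓ)
  have hdiff : ∀ ℓ : ℕ, ℓ < 4 → ∀ x : ℝ,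
      HasDerivAt (iteratedDeriv ℓ f) (iteratedDeriv (ℓ + 1) f x) x := by
    intro ℓ hℓ x
    have hD : DifferentiableAt ℝ (iteratedDeriv ℓ f) x :=
      (hcd.differentiable_iteratedDeriv ℓ (by exact_mod_cast hℓ)) x
    have := hD.hasDerivAt
    rwa [← iteratedDeriv_succ] at this
  have hperℓ : ∀ ℓ : ℕ, Function.Periodic (iteratedDeriv ℓ f) (2 * π) :=
    periodic_iteratedDeriv hper
  have hpt : ∀ ℓ : ℕ, ℓ ≤ 4 → ∀ x : ℝ, |iteratedDeriv ℓ f x| ≤ M ℓ := fun ℓ hℓ x =>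
    le_C0Norm (hcont ℓ hℓ) (hperℓ ℓ) x
  have hMnn : ∀ ℓ : ℕ, 0 ≤ M ℓ := fun ℓ => C0Norm_nonneg _
  set H1 : ℝ := holderSemi γ (iteratedDeriv 1 f) with hH1def
  set H4 : ℝ := holderSemi γ (iteratedDeriv 4 f) with hH4def
  have hH1pt : ∀ x y : ℝ, |iteratedDeriv 1 f x - iteratedDeriv 1 f y| ≤ H1 * |x - y| ^ γ :=
    fun x y => by
      have := le_holderSemi hγ0 hHo1 x y; rwa [Real.norm_eq_abs] at this
  have hH4pt : ∀ x y : ℝ, |iteratedDeriv 4 f x - iteratedDeriv 4 f y| ≤ H4 * |x - y| ^ γ :=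
    fun x y => by
      have := le_holderSemi hγ0 hHo4 x y; rwa [Real.norm_eq_abs] at this
  have hH1nn : 0 ≤ H1 := holderSemi_nonneg _ _
  have hH4nn : 0 ≤ H4 := holderSemi_nonneg _ _
  have hlip : ∀ ℓ : ℕ, ℓ < 4 → ∀ x y : ℝ,
      |iteratedDeriv ℓ f x - iteratedDeriv ℓ f y| ≤ M (ℓ + 1) * |x - y| := fun ℓ hℓ =>
    diff_le (hdiff ℓ hℓ) (hcont (ℓ + 1) (by omega)) (hpt (ℓ + 1) (by omega))
  -- E-level inequalities
  have hE2 : ∀ s : ℝ, 0 < s → M 2 ≤ H1 * s ^ (γ - 1) + M 3 * s := by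
    intro s hs
    apply C0Norm_le
    intro x
    have hEb : ∀ u ∈ Set.Icc x (x + s), |iteratedDeriv 2 f u - iteratedDeriv 2 f x| ≤ M 3 * s := by
      intro u hu
      refine (hlip 2 (by norm_num) u x).trans ?_
      have habs : |u - x| ≤ s := by
        rw [abs_of_nonneg (by linarith [hu.1])]; linarith [hu.2]
      exact mul_le_mul_of_nonneg_left habs (hMnn 3)
    have hKL := KL (hdiff 1 (by norm_num)) (hcont 2 (by norm_num)) hs hEb
    refine hKL.trans ?_
    have hΔ : |iteratedDeriv 1 f (x + s) - iteratedDeriv 1 f x| ≤ H1 * s ^ γ := by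
      refine (hH1pt (x + s) x).trans ?_
      rw [show x + s - x = s by ring, abs_of_pos hs]
    calc |iteratedDeriv 1 f (x + s) - iteratedDeriv 1 f x| / s + M 3 * s
        ≤ H1 * s ^ γ / s + M 3 * s := by gcongr
      _ = H1 * s ^ (γ - 1) + M 3 * s := by
          rw [Real.rpow_sub hs, Real.rpow_one, mul_div_assoc]
  have hE3 : ∀ s : ℝ, 0 < s → M 3 ≤ 2 * M 2 * s ^ (-1 : ℝ) + M 4 * s := by
    intro s hs
    apply C0Norm_le
    intro x
    have hEb : ∀ u ∈ Set.Icc x (x + s), |iteratedDeriv 3 f u - iteratedDeriv 3 f x| ≤ M 4 * s := by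
      intro u hu
      refine (hlip 3 (by norm_num) u x).trans ?_
      have habs : |u - x| ≤ s := by
        rw [abs_of_nonneg (by linarith [hu.1])]; linarith [hu.2]
      exact mul_le_mul_of_nonneg_left habs (hMnn 4)
    have hKL := KL (hdiff 2 (by norm_num)) (hcont 3 (by norm_num)) hs hEb
    refine hKL.trans ?_
    have hΔ : |iteratedDeriv 2 f (x + s) - iteratedDeriv 2 f x| ≤ 2 * M 2 := by
      have h1 := hpt 2 (by norm_num) (x + s)
      have h2 := hpt 2 (by norm_num) x
      have := abs_sub (iteratedDeriv 2 f (x + s)) (iteratedDeriv 2 f x)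
      linarith
    calc |iteratedDeriv 2 f (x + s) - iteratedDeriv 2 f x| / s + M 4 * s
        ≤ 2 * M 2 / s + M 4 * s := by gcongr
      _ = 2 * M 2 * s ^ (-1 : ℝ) + M 4 * s := by
          rw [Real.rpow_neg_one, ← div_eq_mul_inv]
  have hE4 : ∀ s : ℝ, 0 < s → M 4 ≤ 2 * M 3 * s ^ (-1 : ℝ) + H4 * s ^ γ := by
    intro s hs
    apply C0Norm_le
    intro x
    have hEb : ∀ u ∈ Set.Icc x (x + s),
        |iteratedDeriv 4 f u - iteratedDeriv 4 f x| ≤ H4 * s ^ γ := by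
      intro u hu
      refine (hH4pt u x).trans ?_
      have habs : |u - x| ≤ s := by
        rw [abs_of_nonneg (by linarith [hu.1])]; linarith [hu.2]
      exact mul_le_mul_of_nonneg_left
        (Real.rpow_le_rpow (abs_nonneg _) habs hγ0.le) hH4nn
    have hKL := KL (hdiff 3 (by norm_num)) (hcont 4 (by norm_num)) hs hEb
    refine hKL.trans ?_
    have hΔ : |iteratedDeriv 3 f (x + s) - iteratedDeriv 3 f x| ≤ 2 * M 3 := by
      have h1 := hpt 3 (by norm_num) (x + s)
      have h2 := hpt 3 (by norm_num) x
      have := abs_sub (iteratedDeriv 3 f (x + s)) (iteratedDeriv 3 f x)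
      linarith
    calc |iteratedDeriv 3 f (x + s) - iteratedDeriv 3 f x| / s + H4 * s ^ γ
        ≤ 2 * M 3 / s + H4 * s ^ γ := by gcongr
      _ = 2 * M 3 * s ^ (-1 : ℝ) + H4 * s ^ γ := by
          rw [Real.rpow_neg_one, ← div_eq_mul_inv]
  -- ★ chain
  have h8γ : ∀ s : ℝ, 0 < s → ((8:ℝ) * s) ^ γ ≤ 8 * s ^ γ := by
    intro s hs
    rw [Real.mul_rpow (by norm_num) hs.le]
    have h8 : ((8:ℝ)) ^ γ ≤ 8 := by
      calc ((8:ℝ)) ^ γ ≤ ((8:ℝ)) ^ (1:ℝ) :=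
            Real.rpow_le_rpow_of_exponent_le (by norm_num) hγ1.le
        _ = 8 := Real.rpow_one 8
    exact mul_le_mul_of_nonneg_right h8 (Real.rpow_nonneg hs.le γ)
  have h8inv : ∀ s : ℝ, 0 < s → ((8:ℝ) * s) ^ (-1 : ℝ) = (8:ℝ)⁻¹ * s ^ (-1 : ℝ) := by
    intro s hs
    rw [Real.mul_rpow (by norm_num) hs.le, Real.rpow_neg_one]
  have hinvmul : ∀ s : ℝ, 0 < s → s ^ (-1 : ℝ) * s = 1 := by
    intro s hs; rw [Real.rpow_neg_one]; field_simp
  have hS3a : ∀ s : ℝ, 0 < s → M 3 ≤ 3 * M 2 * s ^ (-1 : ℝ) + 11 * H4 * s ^ (γ + 1) := by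
    intro s hs
    have e3 := hE3 s hs
    have e4 := hE4 (8 * s) (by positivity)
    have e4' : M 4 ≤ (1/4) * M 3 * s ^ (-1 : ℝ) + 8 * H4 * s ^ γ := by
      refine e4.trans ?_
      rw [h8inv s hs]
      have := mul_le_mul_of_nonneg_left (h8γ s hs) hH4nn
      nlinarith [hMnn 3, Real.rpow_nonneg hs.le (-1 : ℝ)]
    have hmul := mul_le_mul_of_nonneg_right e4' hs.le
    have hexp : ((1/4) * M 3 * s ^ (-1 : ℝ) + 8 * H4 * s ^ γ) * s
        = (1/4) * M 3 + 8 * H4 * s ^ (γ + 1) := by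
      rw [add_mul, mul_assoc ((1/4) * M 3), hinvmul s hs, mul_one,
        mul_assoc (8 * H4), (Real.rpow_add_one hs.ne' γ).symm]
    rw [hexp] at hmul
    have n1 : 0 ≤ M 2 * s ^ (-1 : ℝ) := mul_nonneg (hMnn 2) (Real.rpow_nonneg hs.le _)
    have n2 : 0 ≤ H4 * s ^ (γ + 1) := mul_nonneg hH4nn (Real.rpow_nonneg hs.le _)
    nlinarith [e3]
  have hS2 : ∀ s : ℝ, 0 < s → M 2 ≤ 2 * H1 * s ^ (γ - 1) + 1200 * H4 * s ^ (γ + 2) := by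
    intro s hs
    have e2 := hE2 s hs
    have e3 := hS3a (8 * s) (by positivity)
    have h8γ1 : ((8:ℝ) * s) ^ (γ + 1) ≤ 64 * s ^ (γ + 1) := by
      rw [Real.mul_rpow (by norm_num) hs.le]
      have h8 : ((8:ℝ)) ^ (γ + 1) ≤ 64 := by
        calc ((8:ℝ)) ^ (γ + 1) ≤ ((8:ℝ)) ^ (2:ℝ) :=
              Real.rpow_le_rpow_of_exponent_le (by norm_num) (by linarith)
          _ = 64 := by
              rw [show (2:ℝ) = ((2:ℕ):ℝ) by norm_num, Real.rpow_natCast]; norm_num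
      exact mul_le_mul_of_nonneg_right h8 (Real.rpow_nonneg hs.le _)
    have e3' : M 3 ≤ (3/8) * M 2 * s ^ (-1 : ℝ) + 704 * H4 * s ^ (γ + 1) := by
      refine e3.trans ?_
      rw [h8inv s hs]
      have := mul_le_mul_of_nonneg_left h8γ1 (by positivity : (0:ℝ) ≤ 11 * H4)
      nlinarith [hMnn 2, Real.rpow_nonneg hs.le (-1 : ℝ)]
    have hmul := mul_le_mul_of_nonneg_right e3' hs.le
    have hexp : ((3/8) * M 2 * s ^ (-1 : ℝ) + 704 * H4 * s ^ (γ + 1)) * s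
        = (3/8) * M 2 + 704 * H4 * s ^ (γ + 2) := by
      rw [add_mul, mul_assoc ((3/8) * M 2), hinvmul s hs, mul_one,
        mul_assoc (704 * H4), show s ^ (γ + 1) * s = s ^ (γ + 2) by
          rw [show γ + 2 = γ + 1 + 1 by ring]; exact (Real.rpow_add_one hs.ne' (γ + 1)).symm]
    rw [hexp] at hmul
    have n1 : 0 ≤ H1 * s ^ (γ - 1) := mul_nonneg hH1nn (Real.rpow_nonneg hs.le _)
    have n2 : 0 ≤ H4 * s ^ (γ + 2) := mul_nonneg hH4nn (Real.rpow_nonneg hs.le _)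
    nlinarith [e2]
  have hS3 : ∀ s : ℝ, 0 < s → M 3 ≤ 6 * H1 * s ^ (γ - 2) + 4000 * H4 * s ^ (γ + 1) := by
    intro s hs
    have e3 := hS3a s hs
    have e2 := hS2 s hs
    have hmul := mul_le_mul_of_nonneg_right e2
      (by positivity : (0:ℝ) ≤ 3 * s ^ (-1 : ℝ))
    have hexp : (2 * H1 * s ^ (γ - 1) + 1200 * H4 * s ^ (γ + 2)) * (3 * s ^ (-1 : ℝ))
        = 6 * H1 * s ^ (γ - 2) + 3600 * H4 * s ^ (γ + 1) := by
      rw [add_mul]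
      rw [show 2 * H1 * s ^ (γ - 1) * (3 * s ^ (-1 : ℝ))
          = 6 * H1 * (s ^ (γ - 1) * s ^ (-1 : ℝ)) by ring,
        rpow_shift hs (by ring : (γ - 1) + (-1) = γ - 2)]
      rw [show 1200 * H4 * s ^ (γ + 2) * (3 * s ^ (-1 : ℝ))
          = 3600 * H4 * (s ^ (γ + 2) * s ^ (-1 : ℝ)) by ring,
        rpow_shift hs (by ring : (γ + 2) + (-1) = γ + 1)]
    rw [hexp] at hmul
    have n2 : 0 ≤ H4 * s ^ (γ + 1) := mul_nonneg hH4nn (Real.rpow_nonneg hs.le _)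
    have hms : 3 * M 2 * s ^ (-1 : ℝ) = M 2 * (3 * s ^ (-1 : ℝ)) := by ring
    rw [hms] at e3
    nlinarith [e3]
  have hS4 : ∀ s : ℝ, 0 < s → M 4 ≤ 12 * H1 * s ^ (γ - 3) + 9000 * H4 * s ^ γ := by
    intro s hs
    have e4 := hE4 s hs
    have e3 := hS3 s hs
    have hmul := mul_le_mul_of_nonneg_right e3
      (by positivity : (0:ℝ) ≤ 2 * s ^ (-1 : ℝ))
    have hexp : (6 * H1 * s ^ (γ - 2) + 4000 * H4 * s ^ (γ + 1)) * (2 * s ^ (-1 : ℝ))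
        = 12 * H1 * s ^ (γ - 3) + 8000 * H4 * s ^ γ := by
      rw [add_mul]
      rw [show 6 * H1 * s ^ (γ - 2) * (2 * s ^ (-1 : ℝ))
          = 12 * H1 * (s ^ (γ - 2) * s ^ (-1 : ℝ)) by ring,
        rpow_shift hs (by ring : (γ - 2) + (-1) = γ - 3)]
      rw [show 4000 * H4 * s ^ (γ + 1) * (2 * s ^ (-1 : ℝ))
          = 8000 * H4 * (s ^ (γ + 1) * s ^ (-1 : ℝ)) by ring,
        rpow_shift hs (by ring : (γ + 1) + (-1) = γ)]
    rw [hexp] at hmul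
    have n2 : 0 ≤ H4 * s ^ γ := mul_nonneg hH4nn (Real.rpow_nonneg hs.le _)
    have hms : 2 * M 3 * s ^ (-1 : ℝ) = M 3 * (2 * s ^ (-1 : ℝ)) := by ring
    rw [hms] at e4
    nlinarith [e4]
  -- norm-form pointwise bounds
  have hlipr : ∀ ℓ : ℕ, ℓ < 4 → ∀ x y : ℝ,
      ‖iteratedDeriv ℓ f x - iteratedDeriv ℓ f y‖ ≤ M (ℓ + 1) * |x - y| ^ (1:ℝ) := by
    intro ℓ hℓ x y
    rw [Real.norm_eq_abs, Real.rpow_one]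
    exact hlip ℓ hℓ x y
  have hbd0 : ∀ ℓ : ℕ, ℓ ≤ 4 → ∀ x y : ℝ,
      ‖iteratedDeriv ℓ f x - iteratedDeriv ℓ f y‖ ≤ 2 * M ℓ * |x - y| ^ (0:ℝ) := by
    intro ℓ hℓ x y
    rw [Real.norm_eq_abs, Real.rpow_zero, mul_one]
    have h1 := hpt ℓ hℓ x
    have h2 := hpt ℓ hℓ y
    have := abs_sub (iteratedDeriv ℓ f x) (iteratedDeriv ℓ f y)
    linarith
  have hH1r : ∀ x y : ℝ, ‖iteratedDeriv 1 f x - iteratedDeriv 1 f y‖ ≤ H1 * |x - y| ^ γ := by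
    intro x y; rw [Real.norm_eq_abs]; exact hH1pt x y
  have hH4r : ∀ x y : ℝ, ‖iteratedDeriv 4 f x - iteratedDeriv 4 f y‖ ≤ H4 * |x - y| ^ γ := by
    intro x y; rw [Real.norm_eq_abs]; exact hH4pt x y
  -- norm expansions
  have hL0eq : CkgNorm 1 γ f = M 0 + M 1 + H1 := by
    rw [CkgNorm, CkNorm, Finset.Icc_self, Finset.sum_singleton]
    rw [hMdef, hH1def]; simp only [iteratedDeriv_zero]
  have hsum4 : ∑ ℓ ∈ Finset.Icc 1 4, C0Norm (iteratedDeriv ℓ f) = M 1 + M 2 + M 3 + M 4 := by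
    rw [Finset.sum_Icc_succ_top (by norm_num : (1:ℕ) ≤ 4),
      Finset.sum_Icc_succ_top (by norm_num : (1:ℕ) ≤ 3),
      Finset.sum_Icc_succ_top (by norm_num : (1:ℕ) ≤ 2),
      Finset.Icc_self, Finset.sum_singleton]
  have hL1eq : CkgNorm 4 γ f = M 0 + (M 1 + M 2 + M 3 + M 4) + H4 := by
    rw [CkgNorm, CkNorm, hsum4]
    rw [hMdef, hH4def]; simp only [iteratedDeriv_zero] <;> ring
  -- part 1 : L0 ≤ 3 L1
  have hH1le : H1 ≤ M 2 + 2 * M 1 := by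
    have := holder_interp (g := iteratedDeriv 1 f) (A := M 2) (B := 2 * M 1)
      (τ₁ := 1) (τ₂ := 0) (μ := γ) (h := 1) (hMnn 2) (by have := hMnn 1; linarith) one_pos
      hγ1.le hγ0.le (hlipr 1 (by norm_num)) (hbd0 1 (by norm_num))
    rwa [Real.one_rpow, Real.one_rpow, mul_one, mul_one] at this
  have hpart1 : CkgNorm 1 γ f ≤ 3 * CkgNorm 4 γ f := by
    rw [hL0eq, hL1eq]
    have := hMnn 0; have := hMnn 1; have := hMnn 2; have := hMnn 3; have := hMnn 4
    linarith
  refine ⟨hpart1, ?_⟩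
  intro h hh0 hh1
  set L0 : ℝ := CkgNorm 1 γ f with hL0def
  set L1 : ℝ := CkgNorm 4 γ f with hL1def
  have hL0nn : 0 ≤ L0 := CkgNorm_nonneg _ _ _
  have hL1nn : 0 ≤ L1 := CkgNorm_nonneg _ _ _
  have hH1L : H1 ≤ L0 := by
    rw [hL0eq]; have := hMnn 0; have := hMnn 1; linarith
  have hH4L : H4 ≤ L1 := by
    rw [hL1eq]
    have := hMnn 0; have := hMnn 1; have := hMnn 2; have := hMnn 3; have := hMnn 4
    linarith
  have hpA : 0 ≤ h ^ (-α) := Real.rpow_nonneg hh0.le _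
  have hpB : 0 ≤ h ^ (3 - α) := Real.rpow_nonneg hh0.le _
  have hp1 : (1:ℝ) ≤ h ^ (-α) :=
    Real.one_le_rpow_of_pos_of_le_one_of_nonpos hh0 hh1 (by linarith)
  have hcA : ∀ e : ℝ, -α ≤ e → h ^ e ≤ h ^ (-α) := fun e he =>
    Real.rpow_le_rpow_of_exponent_ge hh0 hh1 he
  have hcB : ∀ e : ℝ, 3 - α ≤ e → h ^ e ≤ h ^ (3 - α) := fun e he =>
    Real.rpow_le_rpow_of_exponent_ge hh0 hh1 he
  have hH1f : ∀ c : ℝ, 0 ≤ c → c * H1 * h ^ (-α) ≤ c * (L0 * h ^ (-α)) := by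
    intro c hc
    rw [mul_assoc]
    exact mul_le_mul_of_nonneg_left (mul_le_mul_of_nonneg_right hH1L hpA) hc
  have hH4f : ∀ c : ℝ, 0 ≤ c → c * H4 * h ^ (3 - α) ≤ c * (L1 * h ^ (3 - α)) := by
    intro c hc
    rw [mul_assoc]
    exact mul_le_mul_of_nonneg_left (mul_le_mul_of_nonneg_right hH4L hpB) hc
  have conv2 : ∀ X c1 c2 e1 e2 : ℝ, 0 ≤ c1 → 0 ≤ c2 → -α ≤ e1 → 3 - α ≤ e2 →
      X ≤ c1 * H1 * h ^ e1 + c2 * H4 * h ^ e2 →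
      X ≤ c1 * (L0 * h ^ (-α)) + c2 * (L1 * h ^ (3 - α)) := by
    intro X c1 c2 e1 e2 hc1 hc2 he1 he2 hX
    have t1 : c1 * H1 * h ^ e1 ≤ c1 * H1 * h ^ (-α) :=
      mul_le_mul_of_nonneg_left (hcA e1 he1) (mul_nonneg hc1 hH1nn)
    have t2 : c2 * H4 * h ^ e2 ≤ c2 * H4 * h ^ (3 - α) :=
      mul_le_mul_of_nonneg_left (hcB e2 he2) (mul_nonneg hc2 hH4nn)
    have t3 := hH1f c1 hc1
    have t4 := hH4f c2 hc2
    linarith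
  have hshift : ∀ X c1 c2 e1 e2 q : ℝ, 0 ≤ c1 → 0 ≤ c2 →
      X ≤ c1 * H1 * h ^ e1 + c2 * H4 * h ^ e2 →
      X * h ^ q ≤ c1 * H1 * h ^ (e1 + q) + c2 * H4 * h ^ (e2 + q) := by
    intro X c1 c2 e1 e2 q hc1 hc2 hX
    have hq : 0 ≤ h ^ q := Real.rpow_nonneg hh0.le q
    calc X * h ^ q ≤ (c1 * H1 * h ^ e1 + c2 * H4 * h ^ e2) * h ^ q :=
          mul_le_mul_of_nonneg_right hX hq
      _ = c1 * H1 * (h ^ e1 * h ^ q) + c2 * H4 * (h ^ e2 * h ^ q) := by ring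
      _ = _ := by rw [rpow_shift hh0 rfl, rpow_shift hh0 rfl]
  have bM0 : M 0 ≤ L0 * h ^ (-α) := by
    have hm : M 0 ≤ L0 := by rw [hL0eq]; have := hMnn 1; linarith
    calc M 0 ≤ L0 := hm
      _ = L0 * 1 := by ring
      _ ≤ L0 * h ^ (-α) := mul_le_mul_of_nonneg_left hp1 hL0nn
  have bM1 : M 1 ≤ L0 * h ^ (-α) := by
    have hm : M 1 ≤ L0 := by rw [hL0eq]; have := hMnn 0; linarith
    calc M 1 ≤ L0 := hm
      _ = L0 * 1 := by ring
      _ ≤ L0 * h ^ (-α) := mul_le_mul_of_nonneg_left hp1 hL0nn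
  have bM2 : 1 - γ ≤ α → M 2 ≤ 2 * (L0 * h ^ (-α)) + 1200 * (L1 * h ^ (3 - α)) := fun hc =>
    conv2 _ 2 1200 (γ - 1) (γ + 2) (by norm_num) (by norm_num)
      (by linarith) (by linarith) (hS2 h hh0)
  have bM3 : 2 - γ ≤ α → M 3 ≤ 6 * (L0 * h ^ (-α)) + 4000 * (L1 * h ^ (3 - α)) := fun hc =>
    conv2 _ 6 4000 (γ - 2) (γ + 1) (by norm_num) (by norm_num)
      (by linarith) (by linarith) (hS3 h hh0)
  have bM4 : 3 - γ ≤ α → M 4 ≤ 12 * (L0 * h ^ (-α)) + 9000 * (L1 * h ^ (3 - α)) := fun hc =>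
    conv2 _ 12 9000 (γ - 3) γ (by norm_num) (by norm_num)
      (by linarith) (by linarith) (hS4 h hh0)
  have hQnn : 0 ≤ L0 * h ^ (-α) := mul_nonneg hL0nn hpA
  have hRnn : 0 ≤ L1 * h ^ (3 - α) := mul_nonneg hL1nn hpB
  have hfl : (⌊(1:ℝ) + γ + α⌋ : ℤ) = ⌊γ + α⌋ + 1 := by
    rw [show (1:ℝ) + γ + α = (γ + α) + ((1:ℤ):ℝ) by push_cast; ring, Int.floor_add_intCast]
  have hflnn : (0:ℤ) ≤ ⌊γ + α⌋ := Int.floor_nonneg.2 (by linarith)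
  have hfl3 : ⌊γ + α⌋ ≤ 3 := by
    have : ⌊γ + α⌋ < 4 := Int.floor_lt.2 (by push_cast; linarith)
    omega
  rw [CrNorm]
  by_cases hint : (1:ℝ) + γ + α = ⌊(1:ℝ) + γ + α⌋
  · -- integer case
    rw [if_pos hint]
    have hintGA : γ + α = (⌊γ + α⌋ : ℝ) := by
      rw [hfl] at hint; push_cast at hint; linarith
    have hfl1 : 1 ≤ ⌊γ + α⌋ := by
      by_contra hcon
      have h0 : ⌊γ + α⌋ = 0 := by omega
      rw [h0] at hintGA; push_cast at hintGA; linarith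
    have hn : ⌊γ + α⌋ = 1 ∨ ⌊γ + α⌋ = 2 ∨ ⌊γ + α⌋ = 3 := by omega
    rcases hn with hj | hj | hj
    · have hm : (⌊(1:ℝ) + γ + α⌋).toNat = 2 := by rw [hfl, hj]; rfl
      rw [hm]
      have hα : α = 1 - γ := by rw [hj] at hintGA; push_cast at hintGA; linarith
      have b2 := bM2 (by linarith)
      have hCk : CkNorm 2 f = M 0 + (M 1 + M 2) := by
        rw [CkNorm, Finset.sum_Icc_succ_top (by norm_num : (1:ℕ) ≤ 2),
          Finset.Icc_self, Finset.sum_singleton]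
        rw [hMdef]; simp only [iteratedDeriv_zero] <;> ring
      rw [hCk]; linarith
    · have hm : (⌊(1:ℝ) + γ + α⌋).toNat = 3 := by rw [hfl, hj]; rfl
      rw [hm]
      have hα : α = 2 - γ := by rw [hj] at hintGA; push_cast at hintGA; linarith
      have b2 := bM2 (by linarith)
      have b3 := bM3 (by linarith)
      have hCk : CkNorm 3 f = M 0 + (M 1 + M 2 + M 3) := by
        rw [CkNorm, Finset.sum_Icc_succ_top (by norm_num : (1:ℕ) ≤ 3),
          Finset.sum_Icc_succ_top (by norm_num : (1:ℕ) ≤ 2),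
          Finset.Icc_self, Finset.sum_singleton]
        rw [hMdef]; simp only [iteratedDeriv_zero] <;> ring
      rw [hCk]; linarith
    · have hm : (⌊(1:ℝ) + γ + α⌋).toNat = 4 := by rw [hfl, hj]; rfl
      rw [hm]
      have hα : α = 3 - γ := by rw [hj] at hintGA; push_cast at hintGA; linarith
      have b2 := bM2 (by linarith)
      have b3 := bM3 (by linarith)
      have b4 := bM4 (by linarith)
      have hCk : CkNorm 4 f = M 0 + (M 1 + M 2 + M 3 + M 4) := by
        rw [CkNorm, hsum4]
        rw [hMdef]; simp only [iteratedDeriv_zero] <;> ring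
      rw [hCk]; linarith
  · -- non-integer case
    rw [if_neg hint]
    have hane : γ + α ≠ (⌊γ + α⌋ : ℝ) := by
      intro hcon
      apply hint
      rw [hfl]; push_cast; linarith
    have hlow : (⌊γ + α⌋ : ℝ) < γ + α := lt_of_le_of_ne (Int.floor_le _) (Ne.symm hane)
    have hhigh : γ + α < (⌊γ + α⌋ : ℝ) + 1 := Int.lt_floor_add_one _
    have hj : ⌊γ + α⌋ = 0 ∨ ⌊γ + α⌋ = 1 ∨ ⌊γ + α⌋ = 2 ∨ ⌊γ + α⌋ = 3 := by omega
    rcases hj with hj | hj | hj | hj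
    all_goals rw [hj] at hlow hhigh; push_cast at hlow hhigh
    · -- j = 0 : m = 1, μ = γ + α
      have hm : (⌊(1:ℝ) + γ + α⌋).toNat = 1 := by rw [hfl, hj]; rfl
      have hμ : (1:ℝ) + γ + α - (⌊(1:ℝ) + γ + α⌋ : ℤ) = γ + α := by
        rw [hfl, hj]; push_cast; ring
      rw [hm, hμ, CkgNorm, CkNorm, Finset.Icc_self, Finset.sum_singleton]
      have hIH := holder_interp (g := iteratedDeriv 1 f) (A := M 2) (B := H1)
        (τ₁ := 1) (τ₂ := γ) (μ := γ + α) (h := h) (hMnn 2) hH1nn hh0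
        (by linarith) (by linarith) (hlipr 1 (by norm_num)) hH1r
      have t1 : M 2 * h ^ (1 - (γ + α)) ≤
          2 * H1 * h ^ (-α) + 1200 * H4 * h ^ (3 - α) := by
        have := hshift (M 2) 2 1200 (γ - 1) (γ + 2) (1 - (γ + α))
          (by norm_num) (by norm_num) (hS2 h hh0)
        rwa [show γ - 1 + (1 - (γ + α)) = -α by ring,
          show γ + 2 + (1 - (γ + α)) = 3 - α by ring] at this
      have t2 : H1 * h ^ (γ - (γ + α)) = H1 * h ^ (-α) := by
        rw [show γ - (γ + α) = -α by ring]
      rw [t2] at hIH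
      have t3 := hH1f 2 (by norm_num)
      have t4 := hH4f 1200 (by norm_num)
      have t5 : H1 * h ^ (-α) ≤ L0 * h ^ (-α) :=
        mul_le_mul_of_nonneg_right hH1L hpA
      have hC0f : C0Norm f = M 0 := by rw [hMdef]; simp only [iteratedDeriv_zero] <;> ring
      rw [hC0f]
      linarith
    · -- j = 1 : m = 2, μ = γ + α - 1
      have hm : (⌊(1:ℝ) + γ + α⌋).toNat = 2 := by rw [hfl, hj]; rfl
      have hμ : (1:ℝ) + γ + α - (⌊(1:ℝ) + γ + α⌋ : ℤ) = γ + α - 1 := by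
        rw [hfl, hj]; push_cast; ring
      rw [hm, hμ, CkgNorm]
      have hCk : CkNorm 2 f = M 0 + (M 1 + M 2) := by
        rw [CkNorm, Finset.sum_Icc_succ_top (by norm_num : (1:ℕ) ≤ 2),
          Finset.Icc_self, Finset.sum_singleton]
        rw [hMdef]; simp only [iteratedDeriv_zero] <;> ring
      rw [hCk]
      have b2 := bM2 (by linarith)
      have hIH := holder_interp (g := iteratedDeriv 2 f) (A := M 3) (B := 2 * M 2)
        (τ₁ := 1) (τ₂ := 0) (μ := γ + α - 1) (h := h) (hMnn 3) (by have := hMnn 2; linarith) hh0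
        (by linarith) (by linarith) (hlipr 2 (by norm_num)) (hbd0 2 (by norm_num))
      have t1 : M 3 * h ^ (1 - (γ + α - 1)) ≤
          6 * H1 * h ^ (-α) + 4000 * H4 * h ^ (3 - α) := by
        have := hshift (M 3) 6 4000 (γ - 2) (γ + 1) (1 - (γ + α - 1))
          (by norm_num) (by norm_num) (hS3 h hh0)
        rwa [show γ - 2 + (1 - (γ + α - 1)) = -α by ring,
          show γ + 1 + (1 - (γ + α - 1)) = 3 - α by ring] at this
      have t2 : 2 * M 2 * h ^ (0 - (γ + α - 1)) ≤
          4 * H1 * h ^ (-α) + 2400 * H4 * h ^ (3 - α) := by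
        have := hshift (M 2) 2 1200 (γ - 1) (γ + 2) (0 - (γ + α - 1))
          (by norm_num) (by norm_num) (hS2 h hh0)
        rw [show γ - 1 + (0 - (γ + α - 1)) = -α by ring,
          show γ + 2 + (0 - (γ + α - 1)) = 3 - α by ring] at this
        nlinarith [this]
      have t3 := hH1f 10 (by norm_num)
      have t4 := hH4f 6400 (by norm_num)
      linarith
    · -- j = 2 : m = 3, μ = γ + α - 2
      have hm : (⌊(1:ℝ) + γ + α⌋).toNat = 3 := by rw [hfl, hj]; rfl
      have hμ : (1:ℝ) + γ + α - (⌊(1:ℝ) + γ + α⌋ : ℤ) = γ + α - 2 := by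
        rw [hfl, hj]; push_cast; ring
      rw [hm, hμ, CkgNorm]
      have hCk : CkNorm 3 f = M 0 + (M 1 + M 2 + M 3) := by
        rw [CkNorm, Finset.sum_Icc_succ_top (by norm_num : (1:ℕ) ≤ 3),
          Finset.sum_Icc_succ_top (by norm_num : (1:ℕ) ≤ 2),
          Finset.Icc_self, Finset.sum_singleton]
        rw [hMdef]; simp only [iteratedDeriv_zero] <;> ring
      rw [hCk]
      have b2 := bM2 (by linarith)
      have b3 := bM3 (by linarith)
      have hIH := holder_interp (g := iteratedDeriv 3 f) (A := M 4) (B := 2 * M 3)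
        (τ₁ := 1) (τ₂ := 0) (μ := γ + α - 2) (h := h) (hMnn 4) (by have := hMnn 3; linarith) hh0
        (by linarith) (by linarith) (hlipr 3 (by norm_num)) (hbd0 3 (by norm_num))
      have t1 : M 4 * h ^ (1 - (γ + α - 2)) ≤
          12 * H1 * h ^ (-α) + 9000 * H4 * h ^ (3 - α) := by
        have := hshift (M 4) 12 9000 (γ - 3) γ (1 - (γ + α - 2))
          (by norm_num) (by norm_num) (hS4 h hh0)
        rwa [show γ - 3 + (1 - (γ + α - 2)) = -α by ring,
          show γ + (1 - (γ + α - 2)) = 3 - α by ring] at this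
      have t2 : 2 * M 3 * h ^ (0 - (γ + α - 2)) ≤
          12 * H1 * h ^ (-α) + 8000 * H4 * h ^ (3 - α) := by
        have := hshift (M 3) 6 4000 (γ - 2) (γ + 1) (0 - (γ + α - 2))
          (by norm_num) (by norm_num) (hS3 h hh0)
        rw [show γ - 2 + (0 - (γ + α - 2)) = -α by ring,
          show γ + 1 + (0 - (γ + α - 2)) = 3 - α by ring] at this
        nlinarith [this]
      have t3 := hH1f 24 (by norm_num)
      have t4 := hH4f 17000 (by norm_num)
      linarith
    · -- j = 3 : m = 4, μ = γ + α - 3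
      have hm : (⌊(1:ℝ) + γ + α⌋).toNat = 4 := by rw [hfl, hj]; rfl
      have hμ : (1:ℝ) + γ + α - (⌊(1:ℝ) + γ + α⌋ : ℤ) = γ + α - 3 := by
        rw [hfl, hj]; push_cast; ring
      rw [hm, hμ, CkgNorm]
      have hCk : CkNorm 4 f = M 0 + (M 1 + M 2 + M 3 + M 4) := by
        rw [CkNorm, hsum4]
        rw [hMdef]; simp only [iteratedDeriv_zero] <;> ring
      rw [hCk]
      have b2 := bM2 (by linarith)
      have b3 := bM3 (by linarith)
      have b4 := bM4 (by linarith)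
      have hIH := holder_interp (g := iteratedDeriv 4 f) (A := H4) (B := 2 * M 4)
        (τ₁ := γ) (τ₂ := 0) (μ := γ + α - 3) (h := h) hH4nn (by have := hMnn 4; linarith) hh0
        (by linarith) (by linarith) hH4r (hbd0 4 (by norm_num))
      have t1 : H4 * h ^ (γ - (γ + α - 3)) = H4 * h ^ (3 - α) := by
        rw [show γ - (γ + α - 3) = 3 - α by ring]
      rw [t1] at hIH
      have t2 : 2 * M 4 * h ^ (0 - (γ + α - 3)) ≤
          24 * H1 * h ^ (-α) + 18000 * H4 * h ^ (3 - α) := by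
        have := hshift (M 4) 12 9000 (γ - 3) γ (0 - (γ + α - 3))
          (by norm_num) (by norm_num) (hS4 h hh0)
        rw [show γ - 3 + (0 - (γ + α - 3)) = -α by ring,
          show γ + (0 - (γ + α - 3)) = 3 - α by ring] at this
        nlinarith [this]
      have t3 := hH1f 24 (by norm_num)
      have t4 := hH4f 18001 (by norm_num)
      have t5 : H4 * h ^ (3 - α) ≤ L1 * h ^ (3 - α) :=
        mul_le_mul_of_nonneg_right hH4L hpB
      linarith

lemma final_aux (γ α e : ℝ) (hγ0 : 0 < γ) (hγ1 : γ < 1) (hα0 : 0 ≤ α) (hα3 : α ≤ 3)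
    (he1 : α ≤ 3 * e) (he3 : 3 * e ≤ 3) :
    ∀ T : ℝ, 0 < T → ∀ f : ℝ → ℝ → ℝ,
      (∀ t ∈ Set.Icc (0:ℝ) T, Function.Periodic (f t) (2*π) ∧ MemCkg 1 γ (f t)) →
      (∀ t ∈ Set.Ioc (0:ℝ) T, MemCkg 4 γ (f t)) →
      (∃ B : ℝ, ∀ t ∈ Set.Icc (0:ℝ) T, CkgNorm 1 γ (f t) ≤ B ∧ t * CkgNorm 4 γ (f t) ≤ B) →
      ∀ t ∈ Set.Ioc (0:ℝ) T,
        CrNorm (1 + γ + α) (f t) ≤ 800000 * t ^ (-e) * XNorm γ T f := by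
  intro T hT f hf1 hf4 hBex t ht
  obtain ⟨B, hB⟩ := hBex
  have htIcc : t ∈ Set.Icc (0:ℝ) T := ⟨ht.1.le, ht.2⟩
  have ht0 : 0 < t := ht.1
  obtain ⟨hc1, hc2⟩ := core hγ0 hγ1 hα0 hα3 (hf1 t htIcc).1 (hf1 t htIcc).2 (hf4 t ht)
  set L0 : ℝ := CkgNorm 1 γ (f t) with hL0def
  set L1 : ℝ := CkgNorm 4 γ (f t) with hL1def
  have hL0nn : 0 ≤ L0 := CkgNorm_nonneg _ _ _
  have hL1nn : 0 ≤ L1 := CkgNorm_nonneg _ _ _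
  have hbdd1 : BddAbove (Set.range fun u : Set.Icc (0:ℝ) T => CkgNorm 1 γ (f u.val)) := by
    refine ⟨B, ?_⟩; rintro _ ⟨u, rfl⟩; exact (hB u.val u.2).1
  have hbdd2 : BddAbove (Set.range fun u : Set.Icc (0:ℝ) T =>
      u.val * CkgNorm 4 γ (f u.val)) := by
    refine ⟨B, ?_⟩; rintro _ ⟨u, rfl⟩; exact (hB u.val u.2).2
  have hnem : Nonempty (Set.Icc (0:ℝ) T) := ⟨⟨0, le_rfl, hT.le⟩⟩
  have hnn1 : 0 ≤ ⨆ u : Set.Icc (0:ℝ) T, CkgNorm 1 γ (f u.val) :=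
    Real.iSup_nonneg fun u => CkgNorm_nonneg _ _ _
  have hnn2 : 0 ≤ ⨆ u : Set.Icc (0:ℝ) T, u.val * CkgNorm 4 γ (f u.val) :=
    Real.iSup_nonneg fun u => mul_nonneg u.2.1 (CkgNorm_nonneg _ _ _)
  have hXnn : 0 ≤ XNorm γ T f := add_nonneg hnn1 hnn2
  have hL0X : L0 ≤ XNorm γ T f := by
    have h1 := le_ciSup hbdd1 (⟨t, htIcc⟩ : Set.Icc (0:ℝ) T)
    rw [XNorm]; simp only at h1; linarith
  have hL1X : t * L1 ≤ XNorm γ T f := by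
    have h1 := le_ciSup hbdd2 (⟨t, htIcc⟩ : Set.Icc (0:ℝ) T)
    rw [XNorm]; simp only at h1; linarith
  rcases le_total t 1 with ht1 | ht1
  · -- t ≤ 1, use h = t^(1/3)
    have hh0 : 0 < t ^ ((1:ℝ)/3) := Real.rpow_pos_of_pos ht0 _
    have hh1 : t ^ ((1:ℝ)/3) ≤ 1 := Real.rpow_le_one ht0.le ht1 (by norm_num)
    have hb := hc2 (t ^ ((1:ℝ)/3)) hh0 hh1
    have hpow1 : (t ^ ((1:ℝ)/3)) ^ (-α) = t ^ (-(α/3)) := by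
      rw [← Real.rpow_mul ht0.le, show (1:ℝ)/3 * (-α) = -(α/3) by ring]
    have hpow2 : (t ^ ((1:ℝ)/3)) ^ (3 - α) = t * t ^ (-(α/3)) := by
      rw [← Real.rpow_mul ht0.le, show (1:ℝ)/3 * (3 - α) = 1 + -(α/3) by ring,
        Real.rpow_add ht0, Real.rpow_one]
    rw [hpow1, hpow2] at hb
    have hp3 : 0 ≤ t ^ (-(α/3)) := Real.rpow_nonneg ht0.le _
    have e1 : L0 * t ^ (-(α/3)) ≤ XNorm γ T f * t ^ (-(α/3)) :=
      mul_le_mul_of_nonneg_right hL0X hp3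
    have e2 : L1 * (t * t ^ (-(α/3))) ≤ XNorm γ T f * t ^ (-(α/3)) := by
      have : L1 * (t * t ^ (-(α/3))) = (t * L1) * t ^ (-(α/3)) := by ring
      rw [this]
      exact mul_le_mul_of_nonneg_right hL1X hp3
    have hcmp : t ^ (-(α/3)) ≤ t ^ (-e) :=
      Real.rpow_le_rpow_of_exponent_ge ht0 ht1 (by linarith)
    have e3 : XNorm γ T f * t ^ (-(α/3)) ≤ XNorm γ T f * t ^ (-e) :=
      mul_le_mul_of_nonneg_left hcmp hXnn
    have hpe : 0 ≤ XNorm γ T f * t ^ (-e) :=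
      mul_nonneg hXnn (Real.rpow_nonneg ht0.le _)
    calc CrNorm (1 + γ + α) (f t)
        ≤ 100000 * (L0 * t ^ (-(α/3)) + L1 * (t * t ^ (-(α/3)))) := hb
      _ ≤ 100000 * (XNorm γ T f * t ^ (-e) + XNorm γ T f * t ^ (-e)) := by linarith
      _ ≤ 800000 * t ^ (-e) * XNorm γ T f := by nlinarith [hpe]
  · -- 1 ≤ t, use h = 1
    have hb := hc2 1 one_pos le_rfl
    rw [Real.one_rpow, Real.one_rpow, mul_one, mul_one] at hb
    have hcmp : t ^ (-1:ℝ) ≤ t ^ (-e) :=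
      Real.rpow_le_rpow_of_exponent_le ht1 (by linarith)
    have hstep : L1 ≤ XNorm γ T f * t ^ (-e) := by
      have h1 : L1 ≤ XNorm γ T f / t := by
        rw [le_div_iff₀ ht0]; linarith [hL1X]
      have h2 : XNorm γ T f / t = XNorm γ T f * t ^ (-1:ℝ) := by
        rw [Real.rpow_neg_one, div_eq_mul_inv]
      rw [h2] at h1
      exact h1.trans (mul_le_mul_of_nonneg_left hcmp hXnn)
    have hpe : 0 ≤ XNorm γ T f * t ^ (-e) :=
      mul_nonneg hXnn (Real.rpow_nonneg ht0.le _)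
    calc CrNorm (1 + γ + α) (f t) ≤ 100000 * (L0 + L1) := hb
      _ ≤ 400000 * L1 := by linarith
      _ ≤ 400000 * (XNorm γ T f * t ^ (-e)) := by linarith
      _ ≤ 800000 * t ^ (-e) * XNorm γ T f := by nlinarith [hpe]

end XI

end

/-- **Lemma 2.1 (time-weighted interpolation).** If `‖f‖_{X(T)} < ∞`, then for
`α ∈ [0,3]` with `γ + α ∉ ℤ`, `‖f(t)‖_{C^{1+γ+α}} ≤ C t^{-α/3} ‖f‖_{X(T)}`, and if
`γ + α ∈ ℤ` then for any `δ ∈ (0, 3-α)`,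
`‖f(t)‖_{C^{1+γ+α}} ≤ C t^{-(α+δ)/3} ‖f‖_{X(T)}`. -/
theorem Xspace_interpolation (γ α : ℝ) (hγ : γ ∈ Set.Ioo (0:ℝ) 1)
    (hα₀ : 0 ≤ α) (hα₃ : α ≤ 3) :
    ((¬∃ n : ℤ, γ + α = n) →
      ∃ C > 0, ∀ T : ℝ, 0 < T → ∀ f : ℝ → ℝ → ℝ,
        (∀ t ∈ Set.Icc (0:ℝ) T, Function.Periodic (f t) (2*π) ∧ MemCkg 1 γ (f t)) →
        (∀ t ∈ Set.Ioc (0:ℝ) T, MemCkg 4 γ (f t)) →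
        (∃ B : ℝ, ∀ t ∈ Set.Icc (0:ℝ) T, CkgNorm 1 γ (f t) ≤ B ∧ t * CkgNorm 4 γ (f t) ≤ B) →
        ∀ t ∈ Set.Ioc (0:ℝ) T,
          CrNorm (1 + γ + α) (f t) ≤ C * t ^ (-(α/3)) * XNorm γ T f) ∧
    ((∃ n : ℤ, γ + α = n) → ∀ δ : ℝ, 0 < δ → δ < 3 - α →
      ∃ C > 0, ∀ T : ℝ, 0 < T → ∀ f : ℝ → ℝ → ℝ,
        (∀ t ∈ Set.Icc (0:ℝ) T, Function.Periodic (f t) (2*π) ∧ MemCkg 1 γ (f t)) →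
        (∀ t ∈ Set.Ioc (0:ℝ) T, MemCkg 4 γ (f t)) →
        (∃ B : ℝ, ∀ t ∈ Set.Icc (0:ℝ) T, CkgNorm 1 γ (f t) ≤ B ∧ t * CkgNorm 4 γ (f t) ≤ B) →
        ∀ t ∈ Set.Ioc (0:ℝ) T,
          CrNorm (1 + γ + α) (f t) ≤ C * t ^ (-((α + δ)/3)) * XNorm γ T f) := by
  constructor
  · intro _hni
    exact ⟨800000, by norm_num,
      XI.final_aux γ α (α/3) hγ.1 hγ.2 hα₀ hα₃ (by linarith) (by linarith)⟩
  · intro _hi δ hδ0 hδ3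
    exact ⟨800000, by norm_num,
      XI.final_aux γ α ((α + δ)/3) hγ.1 hγ.2 hα₀ hα₃ (by linarith) (by linarith)⟩
end
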